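/- arXiv:1106.1850 — 4 statements merged into one kernel-verified Lean document; each statement's English description precedes it below -/
import Mathlib

section
/- Let φ be a 3CNF formula. Then φ is satisfiable if and only if the timed automaton A^NZ_φ has a non-Zeno infinite run. -/
/-! ## Timed automata -/

/-- Comparison operators appearing in clock constraints. -/
inductive Cmp : Type
  | lt | le | eq | ge | gt

/-- Semantics of a comparison on reals. -/
def Cmp.holds : Cmp → ℝ → ℝ → Prop
  | .lt, a, b => a < b
  | .le, a, b => a ≤ b
  | .eq, a, b => a = b
  | .ge, a, b => a ≥ b
  | .gt, a, b => a > b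

/-- An atomic clock constraint `x # c` with `c ∈ ℕ`. -/
structure ClockConstraint (C : Type) where
  clock : C
  cmp : Cmp
  bound : ℕ

/-- A guard is a finite conjunction of atomic clock constraints. -/
abbrev Guard (C : Type) := List (ClockConstraint C)

/-- A clock valuation. -/
abbrev Val (C : Type) := C → NNReal

/-- Satisfaction of a guard by a valuation. -/
def GSat {C : Type} (v : Val C) (g : Guard C) : Prop :=
  ∀ cc ∈ g, cc.cmp.holds (v cc.clock : ℝ) (cc.bound : ℝ)

/-- A transition `(q, g, R, q')` of a timed automaton. -/
structure Transition (Q C : Type) where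
  src : Q
  guard : Guard C
  reset : Set C
  tgt : Q

/-- A timed automaton: initial state and a finite set of transitions. -/
structure TA (Q C : Type) where
  init : Q
  trans : Set (Transition Q C)
  finite_trans : trans.Finite

/-- An infinite run of a timed automaton: alternating delay and action transitions,
starting in the initial state with all clocks at `0`. -/
structure TARun {Q C : Type} (A : TA Q C) where
  st : ℕ → Q
  val : ℕ → Val C
  del : ℕ → NNReal
  tr : ℕ → Transition Q C
  init_st : st 0 = A.init
  init_val : ∀ x, val 0 x = 0
  mem : ∀ i, tr i ∈ A.trans
  src_eq : ∀ i, (tr i).src = st i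
  tgt_eq : ∀ i, (tr i).tgt = st (i + 1)
  guard_sat : ∀ i, GSat (fun x => val i x + del i) (tr i).guard
  reset_eq : ∀ i, ∀ x ∈ (tr i).reset, val (i + 1) x = 0
  unreset_eq : ∀ i, ∀ x ∉ (tr i).reset, val (i + 1) x = val i x + del i

/-- A run is Zeno if the total elapsed time is bounded. -/
def TARun.Zeno {Q C : Type} {A : TA Q C} (ρ : TARun A) : Prop :=
  ∃ c : ℝ, ∀ n : ℕ, ∑ i ∈ Finset.range n, (ρ.del i : ℝ) ≤ c

def HasNonZenoRun {Q C : Type} (A : TA Q C) : Prop := ∃ ρ : TARun A, ¬ ρ.Zeno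

def HasZenoRun {Q C : Type} (A : TA Q C) : Prop := ∃ ρ : TARun A, ρ.Zeno

/-! ## Zones and zone graphs -/

/-- Atomic zone constraints `x ~ c` and `x − y ~ c` with `c ∈ ℤ`. -/
inductive ZoneConstraint (C : Type) : Type
  | single (x : C) (cmp : Cmp) (c : ℤ)
  | diff (x y : C) (cmp : Cmp) (c : ℤ)

def ZoneConstraint.sat {C : Type} (v : Val C) : ZoneConstraint C → Prop
  | .single x cmp c => cmp.holds (v x : ℝ) (c : ℝ)
  | .diff x y cmp c => cmp.holds ((v x : ℝ) - (v y : ℝ)) (c : ℝ)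

/-- A zone is a set of valuations definable by finitely many zone constraints. -/
def IsZone {C : Type} (Z : Set (Val C)) : Prop :=
  ∃ l : List (ZoneConstraint C), Z = { v | ∀ cc ∈ l, cc.sat v }

/-- The initial zone `Z₀ = { v₀ + δ | δ ≥ 0 }`. -/
def ZoneInit (C : Type) : Set (Val C) := { v | ∃ δ : NNReal, ∀ x, v x = δ }

/-- Successor zone along a transition: guard, then reset, then time elapse. -/
def post {Q C : Type} (t : Transition Q C) (Z : Set (Val C)) : Set (Val C) :=
  { v' | ∃ v ∈ Z, ∃ δ : NNReal, GSat v t.guard ∧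
      (∀ x ∈ t.reset, v' x = δ) ∧ (∀ x ∉ t.reset, v' x = v x + δ) }

/-- An abstraction operator on sets of valuations. -/
abbrev Abstr (C : Type) := Set (Val C) → Set (Val C)

/-- A finite abstraction: maps zones to zones, is extensive and idempotent on zones,
and has finite range on zones. -/
def IsFiniteAbstraction {C : Type} (𝔞 : Abstr C) : Prop :=
  (∀ Z : Set (Val C), IsZone Z → IsZone (𝔞 Z) ∧ Z ⊆ 𝔞 Z ∧ 𝔞 (𝔞 Z) = 𝔞 Z) ∧
  { W : Set (Val C) | ∃ Z, IsZone Z ∧ 𝔞 Z = W }.Finite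

/-- Edge of the (unabstracted) zone graph `ZG(A)`. -/
def ZGEdge {Q C : Type} (A : TA Q C) (s s' : Q × Set (Val C)) : Prop :=
  ∃ t ∈ A.trans, t.src = s.1 ∧ t.tgt = s'.1 ∧ (post t s.2).Nonempty ∧ s'.2 = post t s.2

/-- Reachability in the zone graph `ZG(A)` from the initial node. -/
def ZGReach {Q C : Type} (A : TA Q C) (s : Q × Set (Val C)) : Prop :=
  Relation.ReflTransGen (ZGEdge A) (A.init, ZoneInit C) s

/-- Edge of the abstract zone graph `ZG^𝔞(A)`. -/
def AZGEdge {Q C : Type} (A : TA Q C) (𝔞 : Abstr C)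
    (s : Q × Set (Val C)) (t : Transition Q C) (s' : Q × Set (Val C)) : Prop :=
  𝔞 s.2 = s.2 ∧ t ∈ A.trans ∧ t.src = s.1 ∧ t.tgt = s'.1 ∧
    (post t s.2).Nonempty ∧ s'.2 = 𝔞 (post t s.2)

/-- Reachability in the abstract zone graph `ZG^𝔞(A)` from the initial node. -/
def AZGReach {Q C : Type} (A : TA Q C) (𝔞 : Abstr C) (s : Q × Set (Val C)) : Prop :=
  Relation.ReflTransGen (fun a b => ∃ t, AZGEdge A 𝔞 a t b) (A.init, 𝔞 (ZoneInit C)) s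

/-- An infinite path of the abstract zone graph starting at the initial node. -/
structure AZGPath {Q C : Type} (A : TA Q C) (𝔞 : Abstr C) where
  node : ℕ → Q × Set (Val C)
  tr : ℕ → Transition Q C
  init_node : node 0 = (A.init, 𝔞 (ZoneInit C))
  step : ∀ i, AZGEdge A 𝔞 (node i) (tr i) (node (i + 1))

/-- A run instantiates a path: same transitions, matching states, valuations in zones. -/
def Instantiates {Q C : Type} {A : TA Q C} {𝔞 : Abstr C}
    (ρ : TARun A) (π : AZGPath A 𝔞) : Prop :=
  (∀ i, ρ.tr i = π.tr i) ∧ ∀ i, (π.node i).1 = ρ.st i ∧ ρ.val i ∈ (π.node i).2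

/-- Soundness: every infinite path of `ZG^𝔞(A)` can be instantiated as a run of `A`. -/
def SoundAbs {Q C : Type} (A : TA Q C) (𝔞 : Abstr C) : Prop :=
  ∀ π : AZGPath A 𝔞, ∃ ρ : TARun A, Instantiates ρ π

/-- Completeness: every run of `A` is an instance of some path of `ZG^𝔞(A)`. -/
def CompleteAbs {Q C : Type} (A : TA Q C) (𝔞 : Abstr C) : Prop :=
  ∀ ρ : TARun A, ∃ π : AZGPath A 𝔞, Instantiates ρ π

/-! ## Relevant clocks, reduced guessing zone graph -/

/-- Relevant clocks: those checked for `x ≤ 0` or `x = 0` in some guard. -/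
def Rl {Q C : Type} (A : TA Q C) : Set C :=
  { x | ∃ t ∈ A.trans, ∃ cc ∈ t.guard,
      cc.clock = x ∧ cc.bound = 0 ∧ (cc.cmp = Cmp.le ∨ cc.cmp = Cmp.eq) }

/-- Clocks that can be `0` in some valuation of `Z`. -/
def C0 {C : Type} (Z : Set (Val C)) : Set C := { x | ∃ v ∈ Z, v x = 0 }

/-- Edge of the reduced guessing zone graph; `none` labels the `τ`-transitions. -/
def RGZGEdge {Q C : Type} (A : TA Q C) (𝔞 : Abstr C)
    (s : Q × Set (Val C) × Set C) (l : Option (Transition Q C))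
    (s' : Q × Set (Val C) × Set C) : Prop :=
  match l with
  | some t =>
      AZGEdge A 𝔞 (s.1, s.2.1) t (s'.1, s'.2.1) ∧
      (∃ v ∈ s.2.1, GSat v t.guard ∧ ∀ x ∈ Rl A \ s.2.2, 0 < v x) ∧
      s'.2.2 = (s.2.2 ∪ t.reset) ∩ Rl A ∩ C0 s'.2.1
  | none => s'.1 = s.1 ∧ s'.2.1 = s.2.1 ∧ (s'.2.2 = ∅ ∨ s'.2.2 = s.2.2)

/-- Reachability in `RGZG^𝔞(A)` from the initial node `(q₀, 𝔞(Z₀), Rl(A))`. -/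
def RGZGReach {Q C : Type} (A : TA Q C) (𝔞 : Abstr C)
    (s : Q × Set (Val C) × Set C) : Prop :=
  Relation.ReflTransGen (fun a b => ∃ l, RGZGEdge A 𝔞 a l b)
    (A.init, 𝔞 (ZoneInit C), Rl A) s

/-- An infinite path of `RGZG^𝔞(A)` starting at the initial node. -/
structure RGZGPath {Q C : Type} (A : TA Q C) (𝔞 : Abstr C) where
  node : ℕ → Q × Set (Val C) × Set C
  lbl : ℕ → Option (Transition Q C)
  init_node : node 0 = (A.init, 𝔞 (ZoneInit C), Rl A)
  step : ∀ i, RGZGEdge A 𝔞 (node i) (lbl i) (node (i + 1))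

/-- A clock is bounded in a guard if the guard implies `x ≤ c` for some constant `c`. -/
def ClockBounded {C : Type} (x : C) (g : Guard C) : Prop :=
  ∃ c : ℝ, ∀ v : Val C, GSat v g → (v x : ℝ) ≤ c

/-- A blocked path: some clock is bounded infinitely often but reset only finitely often. -/
def RGZGPath.Blocked {Q C : Type} {A : TA Q C} {𝔞 : Abstr C} (π : RGZGPath A 𝔞) : Prop :=
  ∃ x : C,
    { i | ∃ t, π.lbl i = some t ∧ ClockBounded x t.guard }.Infinite ∧
    { i | ∃ t, π.lbl i = some t ∧ x ∈ t.reset }.Finite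

def RGZGPath.Unblocked {Q C : Type} {A : TA Q C} {𝔞 : Abstr C} (π : RGZGPath A 𝔞) : Prop :=
  ¬ π.Blocked

/-- The path visits a clear node (empty guess set) infinitely often. -/
def RGZGPath.ClearInfOften {Q C : Type} {A : TA Q C} {𝔞 : Abstr C} (π : RGZGPath A 𝔞) : Prop :=
  ∀ n : ℕ, ∃ m, n ≤ m ∧ (π.node m).2.2 = (∅ : Set C)

/-- `𝔞` weakly preserves orders (w.r.t. the automaton `A`). -/
def WeaklyPreservesOrders {Q C : Type} (A : TA Q C) (𝔞 : Abstr C) : Prop :=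
  ∀ Z : Set (Val C), IsZone Z → ∀ x y : C,
    x ∈ Rl A ∩ C0 Z → y ∈ Rl A ∩ C0 Z →
    ((∀ v ∈ Z, v x ≤ v y) ↔ ∀ v ∈ 𝔞 Z, v x ≤ v y)

/-! ## Lifted clocks, slow zone graph -/

/-- Clocks `x` such that some guard of `A` implies `x ≥ 1`. -/
def Lf {Q C : Type} (A : TA Q C) : Set C :=
  { x | ∃ t ∈ A.trans, ∀ v : Val C, GSat v t.guard → 1 ≤ (v x : ℝ) }

/-- Lift-safe abstraction. -/
def LiftSafe {Q C : Type} (A : TA Q C) (𝔞 : Abstr C) : Prop :=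
  ∀ Z : Set (Val C), IsZone Z → ∀ x ∈ Lf A,
    ((∀ v ∈ Z, 1 ≤ (v x : ℝ)) ↔ ∀ v ∈ 𝔞 Z, 1 ≤ (v x : ℝ))

/-- Edge of the slow zone graph; the Boolean is `true` on slow nodes,
`none` labels the `τ`-transitions from free to slow. -/
def SZGEdge {Q C : Type} (A : TA Q C) (𝔞 : Abstr C)
    (s : Q × Set (Val C) × Bool) (l : Option (Transition Q C))
    (s' : Q × Set (Val C) × Bool) : Prop :=
  match l with
  | some t =>
      AZGEdge A 𝔞 (s.1, s.2.1) t (s'.1, s'.2.1) ∧ s'.2.2 = s.2.2 ∧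
      (s.2.2 = true → ∀ x ∈ t.reset, ∃ v ∈ s.2.1, GSat v t.guard ∧ (v x : ℝ) < 1)
  | none => s.2.2 = false ∧ s'.1 = s.1 ∧ s'.2.1 = s.2.1 ∧ s'.2.2 = true

/-- Reachability in `SZG^𝔞(A)` from the initial node `(q₀, 𝔞(Z₀), free)`. -/
def SZGReach {Q C : Type} (A : TA Q C) (𝔞 : Abstr C)
    (s : Q × Set (Val C) × Bool) : Prop :=
  Relation.ReflTransGen (fun a b => ∃ l, SZGEdge A 𝔞 a l b)
    (A.init, 𝔞 (ZoneInit C), false) s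

/-- An infinite path of `SZG^𝔞(A)` starting at the initial node. -/
structure SZGPath {Q C : Type} (A : TA Q C) (𝔞 : Abstr C) where
  node : ℕ → Q × Set (Val C) × Bool
  lbl : ℕ → Option (Transition Q C)
  init_node : node 0 = (A.init, 𝔞 (ZoneInit C), false)
  step : ∀ i, SZGEdge A 𝔞 (node i) (lbl i) (node (i + 1))

/-- A slow path: some suffix consists entirely of slow nodes. -/
def SZGPath.Slow {Q C : Type} {A : TA Q C} {𝔞 : Abstr C} (π : SZGPath A 𝔞) : Prop :=
  ∃ N, ∀ i, N ≤ i → (π.node i).2.2 = true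

/-! ## DBMs and LU-extrapolations -/

/-- A DBM entry: `∞` or a bound `(c, <)` / `(c, ≤)`. -/
inductive DBMEntry : Type
  | inf
  | bnd (c : ℤ) (strict : Bool)

/-- A real `d` satisfies a DBM entry. -/
def DBMEntry.sat (d : ℝ) : DBMEntry → Prop
  | .inf => True
  | .bnd c true => d < (c : ℝ)
  | .bnd c false => d ≤ (c : ℝ)

/-- A DBM over clocks `C`; `none` is the special clock `x₀` with value `0`. -/
abbrev DBM (C : Type) := Option C → Option C → DBMEntry

/-- Extend a valuation with the special clock `x₀ = 0`. -/
def ext0 {C : Type} (v : Val C) : Option C → ℝ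
  | none => 0
  | some x => (v x : ℝ)

/-- The zone described by a DBM. -/
def dbmZone {C : Type} (M : DBM C) : Set (Val C) :=
  { v | ∀ i j, (M i j).sat (ext0 v i - ext0 v j) }

/-- `M` is the canonical DBM of the nonempty zone `Z`: it defines `Z` and each of
its entries is the tightest constraint satisfied by all valuations of `Z`. -/
def IsCanonicalDBM {C : Type} (Z : Set (Val C)) (M : DBM C) : Prop :=
  Z.Nonempty ∧ dbmZone M = Z ∧
  ∀ i j : Option C, ∀ e : DBMEntry,
    (∀ v ∈ Z, e.sat (ext0 v i - ext0 v j)) →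
    ∀ d : ℝ, (M i j).sat d → e.sat d

/-- A bound in `ℕ ∪ {−∞}` (represented with integer values). -/
inductive ExtBound : Type
  | minf
  | fin (n : ℤ)

def ExtBound.max : ExtBound → ExtBound → ExtBound
  | .minf, b => b
  | .fin a, .minf => .fin a
  | .fin a, .fin b => .fin (a ⊔ b)

/-- Is `c_{ij} > b`? (`c_{ij}` the value of a DBM entry, possibly `∞`). -/
def entryGtB : DBMEntry → ExtBound → Bool
  | .inf, _ => true
  | .bnd _ _, .minf => true
  | .bnd c _, .fin l => decide (l < c)

/-- Is `−c_{ij} > b`? (`−∞` when the entry is `∞`). -/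
def negGtB : DBMEntry → ExtBound → Bool
  | .inf, _ => false
  | .bnd _ _, .minf => true
  | .bnd c _, .fin u => decide (u < -c)

/-- The entry `(−U(x), <)` (which is `(∞, <)` when `U(x) = −∞`). -/
def negUB : ExtBound → DBMEntry
  | .minf => .inf
  | .fin u => .bnd (-u) true

/-- Extend a bound function to the special clock `x₀`, with bound `0`. -/
def extendB {C : Type} (f : C → ExtBound) : Option C → ExtBound
  | none => .fin 0
  | some x => f x

/-- The `Extra_LU` extrapolation of a (canonical) DBM. -/
def extraLU {C : Type} (L U : C → ExtBound) (M : DBM C) : DBM C := fun i j =>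
  if entryGtB (M i j) (extendB L i) then DBMEntry.inf
  else if negGtB (M i j) (extendB U j) then negUB (extendB U j)
  else M i j

/-- The `Extra⁺_LU` extrapolation of a (canonical) DBM. -/
def extraLUp {C : Type} (L U : C → ExtBound) (M : DBM C) : DBM C := fun i j =>
  if entryGtB (M i j) (extendB L i) then DBMEntry.inf
  else if negGtB (M none i) (extendB L i) then DBMEntry.inf
  else if negGtB (M none j) (extendB U j) && i.isSome then DBMEntry.inf
  else if negGtB (M none j) (extendB U j) then negUB (extendB U j)
  else M i j

/-- Constants `c` occurring in lower-bound guards `x > c` or `x ≥ c` of `A`. -/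
def LowerConsts {Q C : Type} (A : TA Q C) (x : C) : Set ℕ :=
  { c | ∃ t ∈ A.trans, ∃ cc ∈ t.guard,
      cc.clock = x ∧ cc.bound = c ∧ (cc.cmp = Cmp.gt ∨ cc.cmp = Cmp.ge) }

/-- Constants `c` occurring in upper-bound guards `x < c` or `x ≤ c` of `A`. -/
def UpperConsts {Q C : Type} (A : TA Q C) (x : C) : Set ℕ :=
  { c | ∃ t ∈ A.trans, ∃ cc ∈ t.guard,
      cc.clock = x ∧ cc.bound = c ∧ (cc.cmp = Cmp.lt ∨ cc.cmp = Cmp.le) }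

/-- `b` is the maximum of `S` (and `−∞` when `S` is empty). -/
def IsBoundOf (S : Set ℕ) (b : ExtBound) : Prop :=
  (S = ∅ ∧ b = ExtBound.minf) ∨
  (∃ c ∈ S, b = ExtBound.fin (c : ℤ) ∧ ∀ c' ∈ S, c' ≤ c)

/-- `L` is the lower-bound function derived from `A`. -/
def IsLFun {Q C : Type} (A : TA Q C) (L : C → ExtBound) : Prop :=
  ∀ x, IsBoundOf (LowerConsts A x) (L x)

/-- `U` is the upper-bound function derived from `A`. -/
def IsUFun {Q C : Type} (A : TA Q C) (U : C → ExtBound) : Prop :=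
  ∀ x, IsBoundOf (UpperConsts A x) (U x)

/-! ## The automata `A^NZ_φ` and `A^Z_φ` built from a 3CNF formula -/

/-- A literal: a propositional variable together with its polarity.
Also used as clock type: `(i, true)` is `xᵢ` and `(i, false)` is `x̄ᵢ`. -/
abbrev Lit (k : ℕ) := Fin k × Bool

/-- States `q₀, …, q_k, r₀, …, r_n`. -/
abbrev CNFState (k n : ℕ) := Fin (k + 1) ⊕ Fin (n + 1)

/-- A 3CNF formula with `n` clauses over `k` variables is satisfiable. -/
def Sat3 {k n : ℕ} (φ : Fin n → Fin 3 → Lit k) : Prop :=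
  ∃ χ : Fin k → Bool, ∀ m : Fin n, ∃ j : Fin 3, χ (φ m j).1 = (φ m j).2

/-- The transitions of `A^NZ_φ`. -/
def anzTrans (k n : ℕ) (φ : Fin n → Fin 3 → Lit k) :
    (Fin k × Bool) ⊕ ((Fin n × Fin 3) ⊕ Bool) → Transition (CNFState k n) (Lit k)
  | Sum.inl (i, b) =>
      ⟨Sum.inl i.castSucc, [], {(i, b)}, Sum.inl i.succ⟩
  | Sum.inr (Sum.inl (m, j)) =>
      ⟨Sum.inr m.castSucc, [⟨φ m j, Cmp.le, 0⟩], ∅, Sum.inr m.succ⟩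
  | Sum.inr (Sum.inr true) =>
      ⟨Sum.inl (Fin.last k), [], ∅, Sum.inr 0⟩
  | Sum.inr (Sum.inr false) =>
      ⟨Sum.inr (Fin.last n), [], ∅, Sum.inl 0⟩

/-- The automaton `A^NZ_φ` (zero-checks `cl(ℓ) ≤ 0` on the clause transitions). -/
def ANZ (k n : ℕ) (φ : Fin n → Fin 3 → Lit k) : TA (CNFState k n) (Lit k) :=
  ⟨Sum.inl 0, Set.range (anzTrans k n φ), Set.finite_range _⟩

/-- The transitions of `A^Z_φ`. -/
def azTrans (k n : ℕ) (φ : Fin n → Fin 3 → Lit k) :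
    (Fin k × Bool) ⊕ ((Fin n × Fin 3) ⊕ Bool) → Transition (CNFState k n) (Lit k)
  | Sum.inl (i, b) =>
      ⟨Sum.inl i.castSucc, [], {(i, b)}, Sum.inl i.succ⟩
  | Sum.inr (Sum.inl (m, j)) =>
      ⟨Sum.inr m.castSucc, [⟨((φ m j).1, !(φ m j).2), Cmp.ge, 1⟩], ∅, Sum.inr m.succ⟩
  | Sum.inr (Sum.inr true) =>
      ⟨Sum.inl (Fin.last k), [], ∅, Sum.inr 0⟩
  | Sum.inr (Sum.inr false) =>
      ⟨Sum.inr (Fin.last n), [], ∅, Sum.inl 0⟩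

/-- The automaton `A^Z_φ` (guards `cl(¬ℓ) ≥ 1` on the clause transitions). -/
def AZfor (k n : ℕ) (φ : Fin n → Fin 3 → Lit k) : TA (CNFState k n) (Lit k) :=
  ⟨Sum.inl 0, Set.range (azTrans k n φ), Set.finite_range _⟩

namespace ANZAux


/-- the state at step `j` of any run -/
def stF (k n : ℕ) (j : ℕ) : CNFState k n :=
  if h : j % (k+n+2) ≤ k then Sum.inl ⟨j % (k+n+2), by omega⟩
  else Sum.inr ⟨j % (k+n+2) - (k+1), by
    have h2 : j % (k+n+2) < k+n+2 := Nat.mod_lt _ (by omega)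
    omega⟩

lemma stF_inl (k n j : ℕ) (h : j % (k+n+2) ≤ k) :
    stF k n j = Sum.inl ⟨j % (k+n+2), by omega⟩ := by
  unfold stF; rw [dif_pos h]

lemma stF_inr (k n j : ℕ) (h : ¬ j % (k+n+2) ≤ k) :
    stF k n j = Sum.inr ⟨j % (k+n+2) - (k+1), by
      have h2 : j % (k+n+2) < k+n+2 := Nat.mod_lt _ (by omega); omega⟩ := by
  unfold stF; rw [dif_neg h]

lemma mod_succ {j t M : ℕ} (hM : 1 < M) (h : j % M = t) (h2 : t + 1 < M) :
    (j+1) % M = t + 1 := by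
  rw [Nat.add_mod, h, Nat.mod_eq_of_lt hM, Nat.mod_eq_of_lt h2]

lemma mod_succ_wrap {j M : ℕ} (hM : 1 < M) (h : j % M = M - 1) : (j+1) % M = 0 := by
  rw [Nat.add_mod, h, Nat.mod_eq_of_lt hM, Nat.sub_add_cancel (by omega), Nat.mod_self]

lemma mul_add_mod' {a M t : ℕ} (h : t < M) : (a * M + t) % M = t := by
  rw [show a * M + t = t + M * a by ring, Nat.add_mul_mod_self_left, Nat.mod_eq_of_lt h]

lemma Tsucc {M : ℕ} (hM : 2 ≤ M) (j : ℕ) :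
    (j + 1 + M - 1)/M = (j + M - 1)/M + (if j % M = 0 then 1 else 0) := by
  rcases Nat.eq_zero_or_pos j with rfl|hj
  · rw [show 0 + 1 + M - 1 = M by omega, show 0 + M - 1 = M - 1 by omega,
      Nat.div_self (by omega), Nat.div_eq_of_lt (by omega)]
    simp
  · rw [show j + 1 + M - 1 = j + M by omega, show j + M - 1 = (j-1) + M by omega,
      Nat.add_div_right _ (by omega), Nat.add_div_right _ (by omega)]
    have hs : (j - 1 + 1) / M = (j - 1) / M + if M ∣ j - 1 + 1 then 1 else 0 := Nat.succ_div
    rw [show j - 1 + 1 = j by omega] at hs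
    rw [hs]
    by_cases hd : j % M = 0
    · simp [hd, Nat.dvd_iff_mod_eq_zero.2 hd]
    · have : ¬ M ∣ j := fun hc => hd (Nat.dvd_iff_mod_eq_zero.1 hc)
      simp [hd, this]


theorem val_accum {Q C : Type} {A : TA Q C} (ρ : TARun A) (x : C) (r : ℕ) :
    ∀ j, r ≤ j → (∀ s, r ≤ s → s < j → x ∉ (ρ.tr s).reset) →
      ρ.val j x = ρ.val r x + ∑ s ∈ Finset.Ico r j, ρ.del s := by
  intro j
  induction j with
  | zero =>
    intro hr _
    interval_cases r
    simp
  | succ j ih =>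
    intro hr h
    rcases eq_or_lt_of_le hr with rfl | hlt
    · simp
    · have hle : r ≤ j := by omega
      rw [Finset.sum_Ico_succ_top hle, ← add_assoc,
        ← ih hle (fun s hs hs' => h s hs (by omega))]
      exact ρ.unreset_eq j x (h j hle (by omega))

theorem stEq (k n : ℕ) (φ : Fin n → Fin 3 → Lit k) (ρ : TARun (ANZ k n φ)) :
    ∀ j, ρ.st j = stF k n j := by
  intro j
  induction j with
  | zero =>
    rw [ρ.init_st, stF_inl k n 0 (by simp)]
    rfl
  | succ j ih =>
    obtain ⟨a, ha⟩ := ρ.mem j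
    have hsrc : (anzTrans k n φ a).src = stF k n j := by rw [ha, ρ.src_eq j, ih]
    have htgt : ρ.st (j+1) = (anzTrans k n φ a).tgt := by rw [← ρ.tgt_eq j, ha]
    have hjlt : j % (k+n+2) < k+n+2 := Nat.mod_lt _ (by omega)
    rcases a with ⟨i, b⟩ | ⟨⟨m, jl⟩ | b⟩
    · -- variable reset transition q_i → q_{i+1}
      simp only [anzTrans] at hsrc htgt
      by_cases h : j % (k+n+2) ≤ k
      swap
      · rw [stF_inr k n j h] at hsrc; exact absurd hsrc (by simp)
      rw [stF_inl k n j h] at hsrc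
      have hi : (i : ℕ) = j % (k+n+2) := by
        have := Sum.inl.inj hsrc
        simpa using congrArg Fin.val this
      have hlt : (i:ℕ) + 1 < k+n+2 := by have := i.isLt; omega
      rw [htgt, stF_inl k n (j+1) (by rw [mod_succ (by omega) hi.symm hlt]; have := i.isLt; omega)]
      congr 1
      apply Fin.ext
      simp [mod_succ (by omega) hi.symm hlt, hi]
    · -- clause transition r_m → r_{m+1}
      simp only [anzTrans] at hsrc htgt
      by_cases h : j % (k+n+2) ≤ k
      · rw [stF_inl k n j h] at hsrc; exact absurd hsrc (by simp)
      rw [stF_inr k n j h] at hsrc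
      have hm : (m : ℕ) = j % (k+n+2) - (k+1) := by
        have := Sum.inr.inj hsrc
        simpa using congrArg Fin.val this
      have hmn := m.isLt
      have hmod : j % (k+n+2) = k + 1 + (m:ℕ) := by omega
      have hlt : j % (k+n+2) + 1 < k+n+2 := by omega
      rw [htgt, stF_inr k n (j+1) (by rw [mod_succ (by omega) rfl hlt]; omega)]
      congr 1
      apply Fin.ext
      simp only [Fin.val_succ, mod_succ (by omega) rfl hlt]
      omega
    · rcases b with _ | _
      -- false : r_n → q_0
      · simp only [anzTrans] at hsrc htgt
        by_cases h : j % (k+n+2) ≤ k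
        · rw [stF_inl k n j h] at hsrc; exact absurd hsrc (by simp)
        rw [stF_inr k n j h] at hsrc
        have hm : (n : ℕ) = j % (k+n+2) - (k+1) := by
          have := Sum.inr.inj hsrc
          simpa [Fin.last] using congrArg Fin.val this
        have hmod : j % (k+n+2) = (k+n+2) - 1 := by omega
        rw [htgt, stF_inl k n (j+1) (by rw [mod_succ_wrap (by omega) hmod]; omega)]
        congr 1
        apply Fin.ext
        simp [mod_succ_wrap (by omega) hmod]
      -- true : q_k → r_0
      · simp only [anzTrans] at hsrc htgt
        by_cases h : j % (k+n+2) ≤ k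
        swap
        · rw [stF_inr k n j h] at hsrc; exact absurd hsrc (by simp)
        rw [stF_inl k n j h] at hsrc
        have hk : j % (k+n+2) = k := by
          have := Sum.inl.inj hsrc
          have := congrArg Fin.val this
          simpa [Fin.last] using this.symm
        have hlt : j % (k+n+2) + 1 < k+n+2 := by omega
        rw [htgt, stF_inr k n (j+1) (by rw [mod_succ (by omega) rfl hlt]; omega)]
        congr 1
        apply Fin.ext
        simp [mod_succ (by omega) rfl hlt, hk]

theorem tr_var (k n : ℕ) (φ : Fin n → Fin 3 → Lit k) (ρ : TARun (ANZ k n φ))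
    (j : ℕ) (i : Fin k) (h : j % (k+n+2) = (i:ℕ)) :
    ∃ b, ρ.tr j = anzTrans k n φ (Sum.inl (i, b)) := by
  obtain ⟨a, ha⟩ := ρ.mem j
  have hsrc : (anzTrans k n φ a).src = stF k n j := by rw [ha, ρ.src_eq j, stEq]
  have hik : (i:ℕ) < k := i.isLt
  rw [stF_inl k n j (by omega)] at hsrc
  rcases a with ⟨i', b⟩ | ⟨⟨m, jl⟩ | b⟩
  · simp only [anzTrans] at hsrc
    have hi : (i' : ℕ) = j % (k+n+2) := by
      simpa using congrArg Fin.val (Sum.inl.inj hsrc)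
    have : i' = i := Fin.ext (by omega)
    subst this
    exact ⟨b, ha.symm⟩
  · exact absurd hsrc (by simp [anzTrans])
  · rcases b with _ | _
    · exact absurd hsrc (by simp [anzTrans])
    · simp only [anzTrans] at hsrc
      have : k = j % (k+n+2) := by
        simpa [Fin.last] using congrArg Fin.val (Sum.inl.inj hsrc)
      omega

theorem tr_clause (k n : ℕ) (φ : Fin n → Fin 3 → Lit k) (ρ : TARun (ANZ k n φ))
    (j : ℕ) (m : Fin n) (h : j % (k+n+2) = k + 1 + (m:ℕ)) :
    ∃ jl, ρ.tr j = anzTrans k n φ (Sum.inr (Sum.inl (m, jl))) := by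
  obtain ⟨a, ha⟩ := ρ.mem j
  have hsrc : (anzTrans k n φ a).src = stF k n j := by rw [ha, ρ.src_eq j, stEq]
  have hmn : (m:ℕ) < n := m.isLt
  rw [stF_inr k n j (by omega)] at hsrc
  rcases a with ⟨i', b⟩ | ⟨⟨m', jl⟩ | b⟩
  · exact absurd hsrc (by simp [anzTrans])
  · simp only [anzTrans] at hsrc
    have hm : (m' : ℕ) = j % (k+n+2) - (k+1) := by
      simpa using congrArg Fin.val (Sum.inr.inj hsrc)
    have : m' = m := Fin.ext (by omega)
    subst this
    exact ⟨jl, ha.symm⟩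
  · rcases b with _ | _
    · simp only [anzTrans] at hsrc
      have : n = j % (k+n+2) - (k+1) := by
        simpa [Fin.last] using congrArg Fin.val (Sum.inr.inj hsrc)
      omega
    · exact absurd hsrc (by simp [anzTrans])

theorem reset_mod (k n : ℕ) (φ : Fin n → Fin 3 → Lit k) (ρ : TARun (ANZ k n φ))
    (j : ℕ) (x : Lit k) (hx : x ∈ (ρ.tr j).reset) : (x.1 : ℕ) = j % (k+n+2) := by
  obtain ⟨a, ha⟩ := ρ.mem j
  have hsrc : (anzTrans k n φ a).src = stF k n j := by rw [ha, ρ.src_eq j, stEq]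
  rw [← ha] at hx
  rcases a with ⟨i', b⟩ | ⟨⟨m', jl⟩ | b⟩
  · simp only [anzTrans, Set.mem_singleton_iff] at hx
    subst hx
    simp only [anzTrans] at hsrc
    by_cases h : j % (k+n+2) ≤ k
    · rw [stF_inl k n j h] at hsrc
      simpa using congrArg Fin.val (Sum.inl.inj hsrc)
    · rw [stF_inr k n j h] at hsrc
      exact absurd hsrc (by simp)
  · simp [anzTrans] at hx
  · rcases b with _ | _ <;> simp [anzTrans] at hx

theorem backward (k n : ℕ) (φ : Fin n → Fin 3 → Lit k) (ρ : TARun (ANZ k n φ))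
    (hNZ : ¬ ρ.Zeno) : Sat3 φ := by
  -- a positive delay at some step p ≥ k
  have hpos : ∃ p, k ≤ p ∧ 0 < ρ.del p := by
    by_contra hcon
    push_neg at hcon
    apply hNZ
    refine ⟨∑ i ∈ Finset.range k, (ρ.del i : ℝ), fun N => ?_⟩
    rcases le_total N k with h | h
    · exact Finset.sum_le_sum_of_subset_of_nonneg (Finset.range_subset_range.2 h)
        (fun i _ _ => (ρ.del i).coe_nonneg)
    · have hz : ∑ i ∈ Finset.Ico k N, (ρ.del i : ℝ) = 0 :=
        Finset.sum_eq_zero (fun i hi => by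
          have h0 := hcon i (Finset.mem_Ico.1 hi).1
          have : ρ.del i = 0 := le_antisymm h0 zero_le
          simp [this])
      rw [Finset.range_eq_Ico, ← Finset.sum_Ico_consecutive _ (Nat.zero_le k) h, hz,
        ← Finset.range_eq_Ico, add_zero]
  obtain ⟨p, hkp, hp⟩ := hpos
  set M := k + n + 2 with hM
  have hM2 : 2 ≤ M := by omega
  have hdm := Nat.div_add_mod (p - k) M
  have hmlt : (p - k) % M < M := Nat.mod_lt _ (by omega)
  obtain ⟨e, he⟩ : ∃ e, (p - k) % M = e := ⟨_, rfl⟩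
  obtain ⟨c, hcq⟩ : ∃ c, (p - k) / M = c := ⟨_, rfl⟩
  rw [he, hcq] at hdm
  rw [he] at hmlt
  have hp1 : M * c + k ≤ p := by omega
  have hp2 : p < M * c + M + k := by omega
  have hA1 : (c+1) * M = M * c + M := by ring
  -- the satisfying assignment: the polarities reset in the (c+1)-st variable phase
  have hvar : ∀ i : Fin k, ∃ b, ρ.tr ((c+1) * M + (i:ℕ)) = anzTrans k n φ (Sum.inl (i, b)) := by
    intro i
    exact tr_var k n φ ρ _ i (mul_add_mod' (by have := i.isLt; omega))
  choose χ hχ using hvar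
  refine ⟨χ, fun m => ?_⟩
  have hmn : (m:ℕ) < n := m.isLt
  set jm := (c+1) * M + (k + 1 + (m:ℕ)) with hjm
  obtain ⟨jl, hjl⟩ := tr_clause k n φ ρ jm m (mul_add_mod' (by omega))
  refine ⟨jl, ?_⟩
  set x := φ m jl with hx
  -- the guard forces the clock x to be 0 at step jm
  have hg := ρ.guard_sat jm
  rw [hjl] at hg
  have hle := hg ⟨x, Cmp.le, 0⟩ (by simp [anzTrans]; exact hx)
  simp only [Cmp.holds] at hle
  have hsum0 : ρ.val jm x + ρ.del jm = 0 := by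
    have : ((ρ.val jm x + ρ.del jm : NNReal) : ℝ) ≤ 0 := by simpa using hle
    exact le_antisymm (by exact_mod_cast this) zero_le
  obtain ⟨hv0, -⟩ := add_eq_zero.1 hsum0
  have hpjm : p < jm := by
    have : M * c + M + k ≤ jm := by rw [hjm, hA1]; omega
    omega
  -- x must have been reset between p and jm
  have hex : ∃ r, p ≤ r ∧ r < jm ∧ x ∈ (ρ.tr r).reset := by
    by_contra hcon
    push_neg at hcon
    have hacc := val_accum ρ x p jm (by omega) (fun s hs hs' => hcon s hs hs')
    rw [hv0] at hacc
    have h1 : ρ.del p ≤ ∑ s ∈ Finset.Ico p jm, ρ.del s :=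
      Finset.single_le_sum (f := ρ.del) (fun _ _ => zero_le)
        (Finset.mem_Ico.2 ⟨le_refl _, hpjm⟩)
    have h2 : ∑ s ∈ Finset.Ico p jm, ρ.del s = 0 := (add_eq_zero.1 hacc.symm).2
    rw [h2] at h1
    exact absurd (le_antisymm h1 zero_le) (ne_of_gt hp)
  obtain ⟨r, hpr, hrj, hxr⟩ := hex
  have hmodr : (x.1 : ℕ) = r % M := reset_mod k n φ ρ r x hxr
  have hx1k : (x.1 : ℕ) < k := x.1.isLt
  -- pin down r as the reset of variable x.1 in the (c+1)-st variable phase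
  have hrdm := Nat.div_add_mod r M
  set q := r / M with hq
  have hrval : r = (c+1) * M + (x.1 : ℕ) := by
    rcases Nat.lt_trichotomy q (c+1) with hqc | hqc | hqc
    · exfalso
      have hmul : M * q ≤ M * c := Nat.mul_le_mul_left M (by omega)
      have : r < M * c + k := by omega
      omega
    · rw [hA1]
      have : M * q = M * c + M := by rw [hq] at hqc ⊢; rw [hqc]; ring
      omega
    · exfalso
      have hmul : M * (c + 2) ≤ M * q := Nat.mul_le_mul_left M (by omega)
      have h2 : M * (c+2) = M * c + M + M := by ring
      have h3 : r < M * c + M + M := by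
        have : jm = M * c + M + (k + 1 + (m:ℕ)) := by rw [hjm, hA1]
        omega
      omega
  rw [hrval, hχ x.1] at hxr
  simp only [anzTrans, Set.mem_singleton_iff] at hxr
  have := congrArg Prod.snd hxr
  simpa using this.symm

/-- transitions of the canonical satisfying run -/
def fwdTr (k n : ℕ) (φ : Fin n → Fin 3 → Lit k) (χ : Fin k → Bool) (w : Fin n → Fin 3)
    (j : ℕ) : Transition (CNFState k n) (Lit k) :=
  if h : j % (k+n+2) < k then
    anzTrans k n φ (Sum.inl (⟨j % (k+n+2), h⟩, χ ⟨j % (k+n+2), h⟩))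
  else if h2 : j % (k+n+2) = k then anzTrans k n φ (Sum.inr (Sum.inr true))
  else if h3 : j % (k+n+2) < k + 1 + n then
    anzTrans k n φ (Sum.inr (Sum.inl (⟨j % (k+n+2) - (k+1), by omega⟩,
      w ⟨j % (k+n+2) - (k+1), by omega⟩)))
  else anzTrans k n φ (Sum.inr (Sum.inr false))

/-- valuations of the canonical satisfying run -/
def fwdVal (k M : ℕ) (χ : Fin k → Bool) (j : ℕ) : Val (Lit k) := fun x =>
  if x.2 = χ x.1 then (if j % M = 0 ∨ (x.1 : ℕ) < j % M then 0 else 1)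
  else (((j + M - 1) / M : ℕ) : NNReal)

/-- delays of the canonical satisfying run -/
def fwdDel (M j : ℕ) : NNReal := if j % M = 0 then 1 else 0

lemma fwdDel_sum (M : ℕ) (hM : 2 ≤ M) (N : ℕ) :
    ∑ i ∈ Finset.range N, fwdDel M i = (((N + M - 1) / M : ℕ) : NNReal) := by
  induction N with
  | zero =>
    rw [Finset.sum_range_zero, show 0 + M - 1 = M - 1 by omega,
      Nat.div_eq_of_lt (by omega), Nat.cast_zero]
  | succ N ih =>
    rw [Finset.sum_range_succ, ih, Tsucc hM N, fwdDel]
    by_cases h : N % M = 0 <;> simp [h]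

theorem forward (k n : ℕ) (φ : Fin n → Fin 3 → Lit k) (hS : Sat3 φ) :
    HasNonZenoRun (ANZ k n φ) := by
  obtain ⟨χ, hχ⟩ := hS
  choose w hw using hχ
  have hmlt : ∀ j : ℕ, j % (k+n+2) < (k+n+2) := fun j => Nat.mod_lt _ (by omega)
  refine ⟨⟨stF k n, fwdVal k (k+n+2) χ, fwdDel (k+n+2), fwdTr k n φ χ w, ?_, ?_, ?_, ?_, ?_, ?_, ?_, ?_⟩, ?_⟩
  · -- init_st
    rw [stF_inl k n 0 (by simp)]; rfl
  · -- init_val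
    intro x
    unfold fwdVal
    split_ifs with hb h2
    · rfl
    · exact absurd (Or.inl (Nat.zero_mod _)) h2
    · rw [show (0 + (k+n+2) - 1) = k+n+1 by omega, Nat.div_eq_of_lt (by omega), Nat.cast_zero]
  · -- mem
    intro i
    unfold fwdTr
    split_ifs <;> exact Set.mem_range_self _
  · -- src_eq
    intro j
    have hj := hmlt j
    unfold fwdTr
    split_ifs with h1 h2 h3
    · rw [stF_inl k n j (by omega)]; rfl
    · rw [stF_inl k n j (by omega)]
      simp only [anzTrans]
      congr 1
      apply Fin.ext
      simp [Fin.last, h2]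
    · rw [stF_inr k n j (by omega)]; rfl
    · rw [stF_inr k n j (by omega)]
      simp only [anzTrans]
      congr 1
      apply Fin.ext
      simp only [Fin.last]
      omega
  · -- tgt_eq
    intro j
    have hj := hmlt j
    unfold fwdTr
    split_ifs with h1 h2 h3
    · have hmod : (j+1) % (k+n+2) = j % (k+n+2) + 1 := mod_succ (by omega) rfl (by omega)
      rw [stF_inl k n (j+1) (by omega)]
      simp only [anzTrans]
      congr 1
      apply Fin.ext
      simp [hmod]
    · have hmod : (j+1) % (k+n+2) = j % (k+n+2) + 1 := mod_succ (by omega) rfl (by omega)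
      rw [stF_inr k n (j+1) (by omega)]
      simp only [anzTrans]
      congr 1
      apply Fin.ext
      simp [hmod, h2]
    · have hmod : (j+1) % (k+n+2) = j % (k+n+2) + 1 := mod_succ (by omega) rfl (by omega)
      rw [stF_inr k n (j+1) (by omega)]
      simp only [anzTrans]
      congr 1
      apply Fin.ext
      simp [hmod]
      omega
    · have hmod : (j+1) % (k+n+2) = 0 := mod_succ_wrap (by omega) (by omega)
      rw [stF_inl k n (j+1) (by omega)]
      simp only [anzTrans]
      congr 1
      apply Fin.ext
      simp [hmod]
  · -- guard_sat
    intro j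
    have hj := hmlt j
    unfold fwdTr
    split_ifs with h1 h2 h3
    · intro cc hcc; simp [anzTrans] at hcc
    · intro cc hcc; simp [anzTrans] at hcc
    · intro cc hcc
      simp only [anzTrans, List.mem_singleton] at hcc
      subst hcc
      simp only [Cmp.holds]
      set m : Fin n := ⟨j % (k+n+2) - (k+1), by omega⟩ with hm
      have hval : fwdVal k (k+n+2) χ j (φ m (w m)) = 0 := by
        unfold fwdVal
        rw [if_pos (hw m).symm, if_pos]
        right
        have := (φ m (w m)).1.isLt
        omega
      have hdel : fwdDel (k+n+2) j = 0 := by unfold fwdDel; rw [if_neg (by omega)]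
      rw [hval, hdel]
      norm_num
    · intro cc hcc; simp [anzTrans] at hcc
  · -- reset_eq
    intro j x hx
    have hj := hmlt j
    unfold fwdTr at hx
    split_ifs at hx with h1 h2 h3
    all_goals simp only [anzTrans, Set.mem_singleton_iff, Set.mem_empty_iff_false] at hx
    subst hx
    have hmod : (j+1) % (k+n+2) = j % (k+n+2) + 1 := mod_succ (by omega) rfl (by omega)
    unfold fwdVal
    rw [if_pos rfl, if_pos (by right; simp [hmod])]
  · -- unreset_eq
    intro j x hx
    have hj := hmlt j
    obtain ⟨i, b⟩ := x
    have hik : (i:ℕ) < k := i.isLt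
    have hsplit : (j+1) % (k+n+2) = j % (k+n+2) + 1 ∨
        (j % (k+n+2) = (k+n+2) - 1 ∧ (j+1) % (k+n+2) = 0) := by
      by_cases hw' : j % (k+n+2) = (k+n+2) - 1
      · exact Or.inr ⟨hw', mod_succ_wrap (by omega) hw'⟩
      · exact Or.inl (mod_succ (by omega) rfl (by omega))
    by_cases hb : b = χ i
    · -- clock of the chosen polarity
      subst hb
      have hne : j % (k+n+2) < k → (i : ℕ) ≠ j % (k+n+2) := by
        intro h1 hcon
        apply hx
        unfold fwdTr
        rw [dif_pos h1]
        simp only [anzTrans, Set.mem_singleton_iff]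
        have : (⟨j % (k+n+2), h1⟩ : Fin k) = i := Fin.ext hcon.symm
        rw [this]
      simp only [fwdVal, fwdDel, eq_self_iff_true, if_true]
      rcases hsplit with hmod | ⟨hw', hmod⟩
      · rw [hmod]
        split_ifs
        all_goals (first
          | (exfalso
             (try simp only [false_or, or_false, not_or] at *)
             (try have := hne (by omega))
             omega)
          | simp)
      · rw [hmod]
        rw [if_pos (Or.inl rfl : (0:ℕ) = 0 ∨ (i:ℕ) < 0),
          if_pos (Or.inr (show (i:ℕ) < j % (k+n+2) by omega) :
            j % (k+n+2) = 0 ∨ (i:ℕ) < j % (k+n+2)),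
          if_neg (show ¬ j % (k+n+2) = 0 by omega)]
        simp
    · -- clock of the other polarity: accumulates total time
      simp only [fwdVal, fwdDel]
      rw [if_neg hb, if_neg hb, Tsucc (by omega) j]
      by_cases h0 : j % (k+n+2) = 0 <;> simp [h0]
  · -- non-Zeno
    intro hz
    obtain ⟨cb, hcb⟩ := hz
    obtain ⟨m0, hm0⟩ := exists_nat_gt cb
    have hcb' : ∑ i ∈ Finset.range ((m0+1)*(k+n+2)), ((fwdDel (k+n+2) i : NNReal) : ℝ) ≤ cb :=
      hcb ((m0+1)*(k+n+2))
    have hsum := fwdDel_sum (k+n+2) (by omega) ((m0+1) * (k+n+2))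
    have hdiv : ((m0+1) * (k+n+2) + (k+n+2) - 1) / (k+n+2) = m0 + 1 := by
      rw [Nat.add_sub_assoc (by omega), mul_comm, Nat.mul_add_div (by omega),
        Nat.div_eq_of_lt (by omega), add_zero]
    rw [hdiv] at hsum
    have hco : ∑ i ∈ Finset.range ((m0+1)*(k+n+2)), ((fwdDel (k+n+2) i : NNReal) : ℝ)
        = ((m0 + 1 : ℕ) : ℝ) := by
      rw [← NNReal.coe_natCast, ← hsum, NNReal.coe_sum]
    rw [hco] at hcb'
    push_cast at hcb'
    linarith

end ANZAux

/-- A 3CNF formula `φ` is satisfiable iff `A^NZ_φ` has a non-Zeno run. -/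
theorem sat3_iff_hasNonZenoRun_ANZ (k n : ℕ) (φ : Fin n → Fin 3 → Lit k) :
    Sat3 φ ↔ HasNonZenoRun (ANZ k n φ) := by
  constructor
  · exact ANZAux.forward k n φ
  · rintro ⟨ρ, h⟩
    exact ANZAux.backward k n φ ρ h
end

section
/- For every 3CNF formula φ, every node (q, Z) reachable in the abstract zone graph ZG^{Extra_LU}(A^NZ_φ) (with the bound functions L, U derived from A^NZ_φ, for which L(x) = −∞ for every clock x) satisfies Z = ℝ≥0^X, the full non-negative half-space; consequently ZG^{Extra_LU}(A^NZ_φ) is isomorphic to A^NZ_φ: its reachable nodes are exactly the pairs (q, ℝ≥0^X) for states q of A^NZ_φ, and (q, ℝ≥0^X) ⇒^t (q', ℝ≥0^X) is a transition of ZG^{Extra_LU}(A^NZ_φ) if and only if t is a transition of A^NZ_φ from q to q'. -/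
/-! ## Auxiliary machinery for the proof -/

section ANZAux

variable {C : Type}

lemma ext0_zero' (i : Option C) : ext0 (fun _ => 0) i = 0 := by cases i <;> simp [ext0]

lemma ext0_nonneg' (v : Val C) (i : Option C) : 0 ≤ ext0 v i := by
  cases i <;> simp [ext0]

lemma ext0_none' (v : Val C) : ext0 v none = 0 := rfl

lemma none_sub_le (v : Val C) (j : Option C) : ext0 v none - ext0 v j ≤ 0 := by
  have h := ext0_nonneg' v j
  rw [ext0_none' v]
  linarith

/-- The DBM with entry `(0, ≤)` where `f` is true and `∞` elsewhere. -/
def dof (f : Option C → Option C → Bool) : DBM C :=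
  fun i j => if f i j then DBMEntry.bnd 0 false else DBMEntry.inf

lemma canonical_dof (f : Option C → Option C → Bool) (Z : Set (Val C))
    (hzero : (fun _ => 0) ∈ Z)
    (hZiff : ∀ v : Val C, v ∈ Z ↔ ∀ i j, f i j = true → ext0 v i - ext0 v j ≤ 0)
    (hunb : ∀ i j, f i j = false → ∀ M : ℝ, ∃ v ∈ Z, M ≤ ext0 v i - ext0 v j) :
    IsCanonicalDBM Z (dof f) := by
  refine ⟨⟨_, hzero⟩, ?_, ?_⟩
  · ext v
    simp only [dbmZone, Set.mem_setOf_eq, hZiff v]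
    constructor
    · intro h i j hf
      have := h i j
      rw [show dof f i j = DBMEntry.bnd 0 false by simp [dof, hf]] at this
      simpa [DBMEntry.sat] using this
    · intro h i j
      by_cases hf : f i j = true
      · rw [show dof f i j = DBMEntry.bnd 0 false by simp [dof, hf]]
        simpa [DBMEntry.sat] using h i j hf
      · rw [show dof f i j = DBMEntry.inf by simp [dof, hf]]
        trivial
  · intro i j e he d hd
    by_cases hf : f i j = true
    · have hd0 : d ≤ 0 := by
        rw [show dof f i j = DBMEntry.bnd 0 false by simp [dof, hf]] at hd
        simpa [DBMEntry.sat] using hd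
      have h0 : e.sat 0 := by
        have := he _ hzero
        simpa [ext0_zero'] using this
      cases e with
      | inf => trivial
      | bnd c s =>
        cases s <;> simp only [DBMEntry.sat] at h0 ⊢ <;> linarith
    · cases e with
      | inf => trivial
      | bnd c s =>
        obtain ⟨v, hv, hM⟩ := hunb i j (by simpa using hf) ((c : ℝ) + 1)
        have := he v hv
        cases s <;> simp only [DBMEntry.sat] at this <;> linarith

lemma extraLU_dof_univ (f : Option C → Option C → Bool)
    (L U : C → ExtBound) (hL : ∀ x, L x = ExtBound.minf)
    (hU : ∀ x, U x = ExtBound.minf ∨ ∃ u : ℤ, 0 ≤ u ∧ U x = ExtBound.fin u) :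
    dbmZone (extraLU L U (dof f)) = Set.univ := by
  ext v
  simp only [Set.mem_univ, iff_true, dbmZone, Set.mem_setOf_eq]
  intro i j
  cases i with
  | some x =>
    have h1 : entryGtB (dof f (some x) j) (extendB L (some x)) = true := by
      rw [show extendB L (some x) = ExtBound.minf from hL x]
      cases dof f (some x) j <;> rfl
    rw [show extraLU L U (dof f) (some x) j = DBMEntry.inf by
      simp only [extraLU]; rw [if_pos h1]]
    trivial
  | none =>
    by_cases hf : f none j = true
    · have hD : dof f none j = DBMEntry.bnd 0 false := by simp [dof, hf]
      have h1 : entryGtB (dof f none j) (extendB L none) = false := by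
        rw [hD]; rfl
      cases j with
      | none =>
        have h2 : negGtB (dof f none none) (extendB U none) = false := by
          rw [hD]; rfl
        rw [show extraLU L U (dof f) none none = DBMEntry.bnd 0 false by
          simp only [extraLU]; rw [if_neg (by simp [h1]), if_neg (by simp [h2]), hD]]
        simp [DBMEntry.sat, ext0]
      | some y =>
        rcases hU y with h | ⟨u, hu, h⟩
        · have h2 : negGtB (dof f none (some y)) (extendB U (some y)) = true := by
            rw [hD, show extendB U (some y) = ExtBound.minf from h]; rfl
          rw [show extraLU L U (dof f) none (some y) = negUB (extendB U (some y)) by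
            simp only [extraLU]; rw [if_neg (by simp [h1]), if_pos h2]]
          rw [show extendB U (some y) = ExtBound.minf from h]
          trivial
        · have h2 : negGtB (dof f none (some y)) (extendB U (some y)) = false := by
            rw [hD, show extendB U (some y) = ExtBound.fin u from h]
            simp only [negGtB, decide_eq_false_iff_not]
            omega
          rw [show extraLU L U (dof f) none (some y) = DBMEntry.bnd 0 false by
            simp only [extraLU]; rw [if_neg (by simp [h1]), if_neg (by simp [h2]), hD]]
          have hvy : (0:ℝ) ≤ (v y : ℝ) := (v y).coe_nonneg
          simp only [DBMEntry.sat, ext0, Int.cast_zero]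
          linarith
    · have hD : dof f none j = DBMEntry.inf := by simp [dof, hf]
      have h1 : entryGtB (dof f none j) (extendB L none) = true := by rw [hD]; rfl
      rw [show extraLU L U (dof f) none j = DBMEntry.inf by
        simp only [extraLU]; rw [if_pos h1]]
      trivial

/-- The zone `{ v | ∀ x, v(c) ≤ v(x) }`. -/
def Zc (c : C) : Set (Val C) := {v | ∀ x, v c ≤ v x}

lemma zero_mem_Zc (c : C) : (fun _ => 0) ∈ Zc c := fun _ => le_refl 0

section DecEq
variable [DecidableEq C]

def fZc (c : C) : Option C → Option C → Bool :=
  fun i j => i.isNone || decide (i = j) || (decide (i = some c) && j.isSome)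

lemma Zc_iff (c : C) (v : Val C) :
    v ∈ Zc c ↔ ∀ i j, fZc c i j = true → ext0 v i - ext0 v j ≤ 0 := by
  constructor
  · intro h i j hf
    cases i with
    | none => exact none_sub_le v j
    | some x =>
      cases j with
      | none => simp [fZc] at hf
      | some y =>
        simp only [fZc, Option.isNone_some, Option.isSome_some, Bool.false_or,
          Bool.and_true, Bool.or_eq_true, decide_eq_true_eq, Option.some.injEq] at hf
        rcases hf with rfl | rfl
        · simp
        · have := h y
          simp only [ext0]
          exact sub_nonpos.mpr (by exact_mod_cast this)
  · intro h x
    have := h (some c) (some x) (by simp [fZc])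
    simp only [ext0] at this
    exact_mod_cast sub_nonpos.mp this

lemma Zc_unb (c : C) : ∀ i j, fZc c i j = false →
    ∀ M : ℝ, ∃ v ∈ Zc c, M ≤ ext0 v i - ext0 v j := by
  intro i j hf M
  match i, j with
  | none, j => simp [fZc] at hf
  | some x, none =>
    refine ⟨fun _ => M.toNNReal, fun _ => le_refl _, ?_⟩
    simp only [ext0, Real.coe_toNNReal', sub_zero]
    exact le_max_left M 0
  | some x, some y =>
    have hxy : x ≠ y := by rintro rfl; simp [fZc] at hf
    have hxc : x ≠ c := by rintro rfl; simp [fZc] at hf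
    refine ⟨fun z => if z = x then M.toNNReal else 0, ?_, ?_⟩
    · intro z
      show (if c = x then M.toNNReal else 0) ≤ (if z = x then M.toNNReal else 0)
      rw [if_neg (show ¬ c = x from fun h => hxc h.symm)]
      exact zero_le
    · have e1 : ext0 (fun z => if z = x then M.toNNReal else 0) (some x)
          = (M.toNNReal : ℝ) := by simp [ext0]
      have e2 : ext0 (fun z => if z = x then M.toNNReal else 0) (some y) = 0 := by
        simp [ext0, show ¬ y = x from fun h => hxy h.symm]
      rw [e1, e2, Real.coe_toNNReal', sub_zero]
      exact le_max_left M 0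

def fUniv : Option C → Option C → Bool :=
  fun i j => i.isNone || decide (i = j)

lemma univ_iff (v : Val C) :
    v ∈ (Set.univ : Set (Val C)) ↔ ∀ i j, fUniv i j = true → ext0 v i - ext0 v j ≤ 0 := by
  simp only [Set.mem_univ, true_iff]
  intro i j hf
  cases i with
  | none => exact none_sub_le v j
  | some x =>
    simp only [fUniv, Option.isNone_some, Bool.false_or, decide_eq_true_eq] at hf
    subst hf
    simp

lemma univ_unb : ∀ i j, (fUniv : Option C → Option C → Bool) i j = false →
    ∀ M : ℝ, ∃ v ∈ (Set.univ : Set (Val C)), M ≤ ext0 v i - ext0 v j := by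
  intro i j hf M
  match i, j with
  | none, j => simp [fUniv] at hf
  | some x, none =>
    refine ⟨fun _ => M.toNNReal, trivial, ?_⟩
    simp only [ext0, Real.coe_toNNReal', sub_zero]
    exact le_max_left M 0
  | some x, some y =>
    have hxy : x ≠ y := by rintro rfl; simp [fUniv] at hf
    refine ⟨fun z => if z = x then M.toNNReal else 0, trivial, ?_⟩
    have e1 : ext0 (fun z => if z = x then M.toNNReal else 0) (some x)
        = (M.toNNReal : ℝ) := by simp [ext0]
    have e2 : ext0 (fun z => if z = x then M.toNNReal else 0) (some y) = 0 := by
      simp [ext0, show ¬ y = x from fun h => hxy h.symm]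
    rw [e1, e2, Real.coe_toNNReal', sub_zero]
    exact le_max_left M 0

def fInit : Option C → Option C → Bool :=
  fun i j => i.isNone || (i.isSome && j.isSome)

lemma init_iff (v : Val C) :
    v ∈ ZoneInit C ↔ ∀ i j, fInit i j = true → ext0 v i - ext0 v j ≤ 0 := by
  constructor
  · rintro ⟨δ, hδ⟩ i j hf
    cases i with
    | none => exact none_sub_le v j
    | some x =>
      cases j with
      | none => simp [fInit] at hf
      | some y => simp [ext0, hδ x, hδ y]
  · intro h
    rcases isEmpty_or_nonempty C with hC | hC
    · exact ⟨0, fun x => hC.elim x⟩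
    · obtain ⟨x₀⟩ := hC
      refine ⟨v x₀, fun x => ?_⟩
      have h1 := h (some x) (some x₀) (by simp [fInit])
      have h2 := h (some x₀) (some x) (by simp [fInit])
      simp only [ext0] at h1 h2
      have : (v x : ℝ) = v x₀ := by linarith
      exact_mod_cast this

lemma init_unb : ∀ i j, (fInit : Option C → Option C → Bool) i j = false →
    ∀ M : ℝ, ∃ v ∈ ZoneInit C, M ≤ ext0 v i - ext0 v j := by
  intro i j hf M
  match i, j with
  | none, j => simp [fInit] at hf
  | some x, none =>
    refine ⟨fun _ => M.toNNReal, ⟨M.toNNReal, fun _ => rfl⟩, ?_⟩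
    simp only [ext0, Real.coe_toNNReal', sub_zero]
    exact le_max_left M 0
  | some x, some y => simp [fInit] at hf

lemma zero_mem_init : (fun _ => 0) ∈ ZoneInit C := ⟨0, fun _ => rfl⟩

end DecEq

/-! Post-zone computations -/

lemma post_reset {Q : Type} (t : Transition Q C) (c : C)
    (hg : t.guard = []) (hr : t.reset = {c}) : post t Set.univ = Zc c := by
  ext v'
  constructor
  · rintro ⟨v, -, δ, -, hres, hunres⟩
    intro x
    have hc : v' c = δ := hres c (by rw [hr]; rfl)
    by_cases hx : x = c
    · rw [hx]
    · have hx' : x ∉ t.reset := by rw [hr]; simpa using hx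
      rw [hc, hunres x hx']
      exact le_add_self
  · intro hv'
    refine ⟨fun x => v' x - v' c, trivial, v' c, ?_, ?_, ?_⟩
    · rw [GSat, hg]; intro cc hcc; cases hcc
    · intro x hx
      rw [hr, Set.mem_singleton_iff] at hx
      rw [hx]
    · intro x _
      exact (tsub_add_cancel_of_le (hv' x)).symm

lemma post_guard {Q : Type} (t : Transition Q C) (c : C)
    (hg : t.guard = [⟨c, Cmp.le, 0⟩]) (hr : t.reset = ∅) : post t Set.univ = Zc c := by
  ext v'
  constructor
  · rintro ⟨v, -, δ, hgs, -, hunres⟩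
    have hvc : (v c : ℝ) ≤ 0 := by
      have := hgs ⟨c, Cmp.le, 0⟩ (by rw [hg]; exact List.mem_singleton_self _)
      simpa [Cmp.holds] using this
    have hvc0 : v c = 0 := le_antisymm (by exact_mod_cast hvc) zero_le
    intro x
    have h1 : v' c = v c + δ := hunres c (by rw [hr]; exact Set.notMem_empty c)
    have h2 : v' x = v x + δ := hunres x (by rw [hr]; exact Set.notMem_empty x)
    rw [h1, h2, hvc0, zero_add]
    exact le_add_self
  · intro hv'
    refine ⟨fun x => v' x - v' c, trivial, v' c, ?_, ?_, ?_⟩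
    · rw [GSat, hg]
      intro cc hcc
      rw [List.mem_singleton] at hcc
      subst hcc
      simp [Cmp.holds, tsub_self]
    · intro x hx
      rw [hr] at hx
      exact absurd hx (Set.notMem_empty x)
    · intro x _
      exact (tsub_add_cancel_of_le (hv' x)).symm

lemma post_free {Q : Type} (t : Transition Q C) (hg : t.guard = [])
    (hr : t.reset = ∅) : post t Set.univ = Set.univ := by
  ext v'
  simp only [Set.mem_univ, iff_true]
  refine ⟨v', trivial, 0, ?_, ?_, ?_⟩
  · rw [GSat, hg]; intro cc hcc; cases hcc
  · intro x hx; rw [hr] at hx; exact absurd hx (Set.notMem_empty x)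
  · intro x _; exact (add_zero _).symm

end ANZAux

/-- With the LU-bounds derived from `A^NZ_φ`, every node reachable in
`ZG^{Extra_LU}(A^NZ_φ)` carries the full zone `ℝ≥0^X`; consequently the abstract zone
graph is isomorphic to the automaton: the reachable nodes are exactly the pairs
`(q, ℝ≥0^X)` and the edges correspond exactly to the transitions of `A^NZ_φ`. -/
theorem azg_extraLU_ANZ_isomorphic (k n : ℕ) (φ : Fin n → Fin 3 → Lit k)
    (L U : Lit k → ExtBound)
    (hL : IsLFun (ANZ k n φ) L) (hU : IsUFun (ANZ k n φ) U)
    (𝔞 : Abstr (Lit k))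
    (h𝔞 : ∀ (Z : Set (Val (Lit k))) (D : DBM (Lit k)),
      IsCanonicalDBM Z D → 𝔞 Z = dbmZone (extraLU L U D)) :
    (∀ (q : CNFState k n) (Z : Set (Val (Lit k))),
        AZGReach (ANZ k n φ) 𝔞 (q, Z) → Z = Set.univ) ∧
    (∀ q : CNFState k n, AZGReach (ANZ k n φ) 𝔞 (q, Set.univ)) ∧
    (∀ (t : Transition (CNFState k n) (Lit k)) (q q' : CNFState k n),
        AZGEdge (ANZ k n φ) 𝔞 (q, Set.univ) t (q', Set.univ) ↔
          t ∈ (ANZ k n φ).trans ∧ t.src = q ∧ t.tgt = q') := by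
  -- L is everywhere -∞
  have hLm : ∀ x, L x = ExtBound.minf := by
    intro x
    have hempty : LowerConsts (ANZ k n φ) x = ∅ := by
      ext c
      simp only [LowerConsts, Set.mem_setOf_eq, Set.mem_empty_iff_false, iff_false]
      rintro ⟨t, ht, cc, hcc, -, -, hcmp⟩
      obtain ⟨y, rfl⟩ := ht
      match y with
      | Sum.inl (i, b) => simp [anzTrans] at hcc
      | Sum.inr (Sum.inl (m, j)) =>
        simp only [anzTrans, List.mem_singleton] at hcc
        subst hcc
        rcases hcmp with h | h <;> simp at h
      | Sum.inr (Sum.inr true) => simp [anzTrans] at hcc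
      | Sum.inr (Sum.inr false) => simp [anzTrans] at hcc
    rcases hL x with ⟨-, h⟩ | ⟨c, hc, -⟩
    · exact h
    · rw [hempty] at hc; exact absurd hc (Set.notMem_empty c)
  -- U is -∞ or a nonnegative integer
  have hUs : ∀ x, U x = ExtBound.minf ∨ ∃ u : ℤ, 0 ≤ u ∧ U x = ExtBound.fin u := by
    intro x
    rcases hU x with ⟨-, h⟩ | ⟨c, -, h, -⟩
    · exact Or.inl h
    · exact Or.inr ⟨(c : ℤ), Int.ofNat_nonneg c, h⟩
  -- abstraction of the relevant zones
  have habs : ∀ (Z : Set (Val (Lit k))) (f : Option (Lit k) → Option (Lit k) → Bool),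
      (fun _ => 0) ∈ Z →
      (∀ v : Val (Lit k), v ∈ Z ↔ ∀ i j, f i j = true → ext0 v i - ext0 v j ≤ 0) →
      (∀ i j, f i j = false → ∀ M : ℝ, ∃ v ∈ Z, M ≤ ext0 v i - ext0 v j) →
      𝔞 Z = Set.univ := by
    intro Z f h1 h2 h3
    rw [h𝔞 Z (dof f) (canonical_dof f Z h1 h2 h3)]
    exact extraLU_dof_univ f L U hLm hUs
  have hainit : 𝔞 (ZoneInit (Lit k)) = Set.univ :=
    habs _ fInit zero_mem_init (fun v => init_iff v) init_unb
  have hauniv : 𝔞 (Set.univ) = Set.univ :=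
    habs _ fUniv trivial (fun v => univ_iff v) univ_unb
  have haZc : ∀ c : Lit k, 𝔞 (Zc c) = Set.univ :=
    fun c => habs _ (fZc c) (zero_mem_Zc c) (fun v => Zc_iff c v) (Zc_unb c)
  -- key: posts from univ abstract to univ and are nonempty
  have hkey : ∀ t ∈ (ANZ k n φ).trans,
      𝔞 (post t Set.univ) = Set.univ ∧ (post t Set.univ).Nonempty := by
    rintro t ⟨y, rfl⟩
    match y with
    | Sum.inl (i, b) =>
      rw [post_reset _ (i, b) rfl rfl]
      exact ⟨haZc _, ⟨_, zero_mem_Zc _⟩⟩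
    | Sum.inr (Sum.inl (m, j)) =>
      rw [post_guard _ (φ m j) rfl rfl]
      exact ⟨haZc _, ⟨_, zero_mem_Zc _⟩⟩
    | Sum.inr (Sum.inr true) =>
      rw [post_free _ rfl rfl]
      exact ⟨hauniv, ⟨fun _ => 0, trivial⟩⟩
    | Sum.inr (Sum.inr false) =>
      rw [post_free _ rfl rfl]
      exact ⟨hauniv, ⟨fun _ => 0, trivial⟩⟩
  refine ⟨?_, ?_, ?_⟩
  · -- every reachable zone is univ
    intro q Z h
    have : ∀ p : CNFState k n × Set (Val (Lit k)),
        AZGReach (ANZ k n φ) 𝔞 p → p.2 = Set.univ := by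
      intro p hp
      induction hp with
      | refl => exact hainit
      | tail hab hbc ih =>
        obtain ⟨t, h1, h2, h3, h4, h5, h6⟩ := hbc
        rw [h6, ih, (hkey t h2).1]
    exact this (q, Z) h
  · -- every state is reachable with zone univ
    have hstep : ∀ (q q' : CNFState k n) (t : Transition (CNFState k n) (Lit k)),
        t ∈ (ANZ k n φ).trans → t.src = q → t.tgt = q' →
        AZGReach (ANZ k n φ) 𝔞 (q, Set.univ) →
        AZGReach (ANZ k n φ) 𝔞 (q', Set.univ) := by
      intro q q' t ht hs htg hr
      exact hr.tail ⟨t, hauniv, ht, hs, htg, (hkey t ht).2, ((hkey t ht).1).symm⟩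
    have hq0 : AZGReach (ANZ k n φ) 𝔞 (Sum.inl 0, Set.univ) := by
      unfold AZGReach
      rw [hainit]
      exact Relation.ReflTransGen.refl
    have hql : ∀ i : Fin (k + 1), AZGReach (ANZ k n φ) 𝔞 (Sum.inl i, Set.univ) := by
      intro i
      induction i using Fin.induction with
      | zero => exact hq0
      | succ i ih =>
        exact hstep _ _ (anzTrans k n φ (Sum.inl (i, true))) ⟨_, rfl⟩ rfl rfl ih
    have hr0 : AZGReach (ANZ k n φ) 𝔞 (Sum.inr 0, Set.univ) :=
      hstep _ _ (anzTrans k n φ (Sum.inr (Sum.inr true))) ⟨_, rfl⟩ rfl rfl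
        (hql (Fin.last k))
    have hqr : ∀ m : Fin (n + 1), AZGReach (ANZ k n φ) 𝔞 (Sum.inr m, Set.univ) := by
      intro m
      induction m using Fin.induction with
      | zero => exact hr0
      | succ m ih =>
        exact hstep _ _ (anzTrans k n φ (Sum.inr (Sum.inl (m, 0)))) ⟨_, rfl⟩ rfl rfl ih
    intro q
    cases q with
    | inl i => exact hql i
    | inr m => exact hqr m
  · -- edges are exactly the transitions
    intro t q q'
    constructor
    · rintro ⟨-, h2, h3, h4, -, -⟩
      exact ⟨h2, h3, h4⟩
    · rintro ⟨ht, hs, htg⟩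
      exact ⟨hauniv, ht, hs, htg, (hkey t ht).2, ((hkey t ht).1).symm⟩
end

section
/- The extrapolation Extra_LU does not weakly preserve orders: there exist a timed automaton A (with bound functions L, U derived from A), a zone Z, and clocks x, y ∈ Rl(A) ∩ C0(Z) such that every valuation of Z satisfies x ≤ y, yet some valuation of Extra_LU(Z) satisfies x > y. The same holds for Extra⁺_LU. -/
/-! ### Auxiliary material for the counterexample -/

def myT : Transition (Fin 1) (Fin 2) :=
  ⟨0, [⟨0, Cmp.le, 0⟩, ⟨1, Cmp.le, 0⟩], ∅, 0⟩

def myA : TA (Fin 1) (Fin 2) := ⟨0, {myT}, Set.finite_singleton _⟩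

def myZ : Set (Val (Fin 2)) := {v | v 0 = v 1}

def myD : DBM (Fin 2) := fun i j =>
  match i, j with
  | none, _ => DBMEntry.bnd 0 false
  | some _, none => DBMEntry.inf
  | some _, some _ => DBMEntry.bnd 0 false

def myE : DBM (Fin 2) := fun i _ =>
  match i with
  | none => DBMEntry.bnd 0 false
  | some _ => DBMEntry.inf

def myL : Fin 2 → ExtBound := fun _ => ExtBound.minf
def myU : Fin 2 → ExtBound := fun _ => ExtBound.fin 0

lemma myL_isLFun : IsLFun myA myL := by
  intro x
  left
  refine ⟨?_, rfl⟩
  ext c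
  simp only [LowerConsts, myA, myT, Set.mem_setOf_eq, Set.mem_singleton_iff,
    Set.mem_empty_iff_false, iff_false]
  rintro ⟨t, ht, cc, hcc, -, -, hcmp⟩
  subst ht
  simp only [List.mem_cons, List.mem_singleton, List.not_mem_nil, or_false] at hcc
  rcases hcc with rfl | rfl <;> rcases hcmp with h | h <;> exact Cmp.noConfusion h

lemma myU_isUFun : IsUFun myA myU := by
  intro x
  right
  refine ⟨0, ?_, rfl, ?_⟩
  · refine ⟨myT, rfl, ?_⟩
    fin_cases x
    · exact ⟨⟨0, Cmp.le, 0⟩, by simp [myT], rfl, rfl, Or.inr rfl⟩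
    · exact ⟨⟨1, Cmp.le, 0⟩, by simp [myT], rfl, rfl, Or.inr rfl⟩
  · rintro c' ⟨t, ht, cc, hcc, -, hb, -⟩
    simp only [myA, Set.mem_singleton_iff] at ht
    subst ht
    simp only [myT, List.mem_cons, List.not_mem_nil, or_false] at hcc
    rcases hcc with rfl | rfl <;> simp_all

lemma myD_canonical : IsCanonicalDBM myZ myD := by
  refine ⟨⟨fun _ => 0, rfl⟩, ?_, ?_⟩
  · ext v
    constructor
    · intro hv
      have h1 := hv (some 0) (some 1)
      have h2 := hv (some 1) (some 0)
      simp only [myD, DBMEntry.sat, ext0] at h1 h2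
      have : (v 0 : ℝ) = (v 1 : ℝ) := by push_cast at h1 h2 ⊢; linarith
      exact NNReal.coe_injective this
    · intro hv i j
      have hveq : (v 0 : ℝ) = (v 1 : ℝ) := by exact_mod_cast congrArg NNReal.toReal hv
      rcases i with _ | x <;> rcases j with _ | y <;>
        simp only [myD, DBMEntry.sat, ext0] <;> try trivial
      · push_cast; norm_num
      · push_cast; linarith [NNReal.coe_nonneg (v y)]
      · fin_cases x <;> fin_cases y <;> simp_all
  · intro i j e he d hd
    cases e with
    | inf => trivial
    | bnd c s =>
      rcases i with _ | x
      · -- i = none : D = bnd 0 false, so d ≤ 0, and he at v = 0 gives sat 0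
        have h0 := he (fun _ => 0) rfl
        have hj : ext0 ((fun _ => 0 : Val (Fin 2))) none - ext0 ((fun _ => 0 : Val (Fin 2))) j = 0 := by
          rcases j with _ | y <;> simp [ext0]
        rw [hj] at h0
        simp only [myD, DBMEntry.sat, Int.cast_zero] at hd
        cases s <;> simp only [DBMEntry.sat] at h0 ⊢ <;> linarith
      · rcases j with _ | y
        · -- i = some, j = none : entry is inf; show hypothesis impossible
          exfalso
          set δ : NNReal := ((c.toNat + 1 : ℕ) : NNReal) with hδ
          have hmem : (fun _ => δ : Val (Fin 2)) ∈ myZ := rfl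
          have h0 := he _ hmem
          simp only [ext0] at h0
          have hgt : (c : ℝ) < (δ : ℝ) - 0 := by
            simp only [hδ, sub_zero]
            push_cast
            have : (c : ℝ) ≤ (c.toNat : ℝ) := by exact_mod_cast Int.self_le_toNat c
            linarith
          cases s <;> simp only [DBMEntry.sat] at h0 <;> linarith
        · -- i = some, j = some : D = bnd 0 false, difference is 0 on Z
          have h0 := he (fun _ => 0) rfl
          simp only [ext0] at h0
          norm_num at h0
          simp only [myD, DBMEntry.sat, Int.cast_zero] at hd
          cases s <;> simp only [DBMEntry.sat] at h0 ⊢ <;> linarith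

lemma extraLU_eq : extraLU myL myU myD = myE := by
  funext i j
  rcases i with _ | x <;> rcases j with _ | y <;>
    simp [extraLU, myD, myE, myL, myU, extendB, entryGtB, negGtB]

lemma extraLUp_eq : extraLUp myL myU myD = myE := by
  funext i j
  rcases i with _ | x <;> rcases j with _ | y <;>
    simp [extraLUp, myD, myE, myL, myU, extendB, entryGtB, negGtB]

def myV : Val (Fin 2) := fun i => if i = 0 then 1 else 0

lemma myV_mem : myV ∈ dbmZone myE := by
  intro i j
  rcases i with _ | x
  · simp only [myE, DBMEntry.sat]
    rcases j with _ | y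
    · simp [ext0]
    · simp only [ext0]
      push_cast
      have : (0:ℝ) ≤ (myV y : ℝ) := (myV y).coe_nonneg
      linarith
  · trivial

lemma mem_Rl (x : Fin 2) : x ∈ Rl myA := by
  fin_cases x
  · exact ⟨myT, rfl, ⟨0, Cmp.le, 0⟩, by simp [myT], rfl, rfl, Or.inl rfl⟩
  · exact ⟨myT, rfl, ⟨1, Cmp.le, 0⟩, by simp [myT], rfl, rfl, Or.inl rfl⟩

lemma mem_C0 (x : Fin 2) : x ∈ C0 myZ := ⟨fun _ => 0, rfl, rfl⟩

lemma main_witness (F : (Fin 2 → ExtBound) → (Fin 2 → ExtBound) → DBM (Fin 2) → DBM (Fin 2))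
    (hE : F myL myU myD = myE) :
    ∃ (A : TA (Fin 1) (Fin 2)) (L U : Fin 2 → ExtBound),
      IsLFun A L ∧ IsUFun A U ∧
      ∃ (Z : Set (Val (Fin 2))) (D : DBM (Fin 2)), IsCanonicalDBM Z D ∧
        ∃ x y : Fin 2, x ∈ Rl A ∩ C0 Z ∧ y ∈ Rl A ∩ C0 Z ∧
          (∀ v ∈ Z, v x ≤ v y) ∧ (∃ v ∈ dbmZone (F L U D), v y < v x) := by
  refine ⟨myA, myL, myU, myL_isLFun, myU_isUFun, myZ, myD, myD_canonical,
    0, 1, ⟨mem_Rl 0, mem_C0 0⟩, ⟨mem_Rl 1, mem_C0 1⟩, ?_, ?_⟩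
  · intro v hv; exact le_of_eq hv
  · refine ⟨myV, hE ▸ myV_mem, ?_⟩
    simp [myV]


/-- `Extra_LU` does not weakly preserve orders: for some automaton `A`
(with its derived bounds `L`, `U`), some zone `Z` and clocks `x, y ∈ Rl(A) ∩ C0(Z)`,
all valuations of `Z` satisfy `x ≤ y` while some valuation of `Extra_LU(Z)` satisfies
`x > y`; the same holds for `Extra⁺_LU`. -/
theorem extraLU_not_weakly_order_preserving :
    (∃ (A : TA (Fin 1) (Fin 2)) (L U : Fin 2 → ExtBound),
      IsLFun A L ∧ IsUFun A U ∧
      ∃ (Z : Set (Val (Fin 2))) (D : DBM (Fin 2)), IsCanonicalDBM Z D ∧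
        ∃ x y : Fin 2, x ∈ Rl A ∩ C0 Z ∧ y ∈ Rl A ∩ C0 Z ∧
          (∀ v ∈ Z, v x ≤ v y) ∧ (∃ v ∈ dbmZone (extraLU L U D), v y < v x)) ∧
    (∃ (A : TA (Fin 1) (Fin 2)) (L U : Fin 2 → ExtBound),
      IsLFun A L ∧ IsUFun A U ∧
      ∃ (Z : Set (Val (Fin 2))) (D : DBM (Fin 2)), IsCanonicalDBM Z D ∧
        ∃ x y : Fin 2, x ∈ Rl A ∩ C0 Z ∧ y ∈ Rl A ∩ C0 Z ∧
          (∀ v ∈ Z, v x ≤ v y) ∧ (∃ v ∈ dbmZone (extraLUp L U D), v y < v x)) := by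
  constructor
  · exact main_witness extraLU extraLU_eq
  · exact main_witness extraLUp extraLUp_eq
end

section
/- Let φ be a 3CNF formula. Then φ is satisfiable if and only if the timed automaton A^Z_φ has a Zeno infinite run. -/
namespace AZHelp

/-- successor mod -/
lemma succ_mod {p : ℕ} (hp : 2 ≤ p) (i : ℕ) :
    (i + 1) % p = if i % p + 1 = p then 0 else i % p + 1 := by
  have h1 : 1 % p = 1 := Nat.mod_eq_of_lt (by omega)
  have h2 : i % p < p := Nat.mod_lt _ (by omega)
  rw [Nat.add_mod, h1]
  split
  · next h => rw [h, Nat.mod_self]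
  · next h => exact Nat.mod_eq_of_lt (by omega)

/-- canonical state at offset r -/
def stOf (k n r : ℕ) : CNFState k n :=
  if h : r ≤ k then Sum.inl ⟨r, by omega⟩ else Sum.inr ⟨min (r - (k+1)) n, by omega⟩

/-- index of the transition taken at offset r in the forward run -/
def idx {k n : ℕ} (χ : Fin k → Bool) (w : Fin n → Fin 3) (r : ℕ) :
    (Fin k × Bool) ⊕ ((Fin n × Fin 3) ⊕ Bool) :=
  if h : r < k then Sum.inl (⟨r, h⟩, χ ⟨r, h⟩)
  else if h2 : r = k then Sum.inr (Sum.inr true)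
  else if h3 : r < k + 1 + n then
    Sum.inr (Sum.inl (⟨r - (k+1), by omega⟩, w ⟨r - (k+1), by omega⟩))
  else Sum.inr (Sum.inr false)

lemma val_le {Q C : Type} {A : TA Q C} (ρ : TARun A) (x : C) (a : ℕ)
    (h0 : ρ.val a x = 0) : ∀ b, a ≤ b →
    (ρ.val b x : ℝ) ≤ ∑ i ∈ Finset.Ico a b, (ρ.del i : ℝ) := by
  intro b hb
  induction b, hb using Nat.le_induction with
  | base => simp [h0]
  | succ b hb ih =>
    rw [Finset.sum_Ico_succ_top hb]
    by_cases hx : x ∈ (ρ.tr b).reset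
    · rw [ρ.reset_eq b x hx]
      have : (0:ℝ) ≤ ∑ i ∈ Finset.Ico a b, (ρ.del i : ℝ) :=
        Finset.sum_nonneg (fun i _ => (ρ.del i).coe_nonneg)
      have := (ρ.del b).coe_nonneg
      push_cast
      linarith
    · rw [ρ.unreset_eq b x hx]
      push_cast
      linarith [(ρ.del b).coe_nonneg]

end AZHelp
namespace AZHelp

lemma src_idx {k n : ℕ} (φ : Fin n → Fin 3 → Lit k) (χ : Fin k → Bool) (w : Fin n → Fin 3)
    (r : ℕ) (hr : r < k + n + 2) :
    (azTrans k n φ (idx χ w r)).src = stOf k n r := by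
  unfold idx stOf
  by_cases h : r < k
  · rw [dif_pos h, dif_pos (le_of_lt h)]
    simp [azTrans, Fin.ext_iff]
  · rw [dif_neg h]
    by_cases h2 : r = k
    · rw [dif_pos h2, dif_pos (show r ≤ k by omega)]
      simp [azTrans, Fin.ext_iff, Fin.last]
      omega
    · rw [dif_neg h2, dif_neg (show ¬ r ≤ k by omega)]
      by_cases h3 : r < k + 1 + n
      · rw [dif_pos h3]
        simp [azTrans, Fin.ext_iff]
        omega
      · rw [dif_neg h3]
        simp [azTrans, Fin.ext_iff, Fin.last]
        omega

lemma tgt_idx {k n : ℕ} (φ : Fin n → Fin 3 → Lit k) (χ : Fin k → Bool) (w : Fin n → Fin 3)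
    (r : ℕ) (hr : r < k + n + 2) :
    (azTrans k n φ (idx χ w r)).tgt = stOf k n (if r + 1 = k + n + 2 then 0 else r + 1) := by
  unfold idx stOf
  by_cases h : r < k
  · rw [dif_pos h, if_neg (show ¬ r + 1 = k + n + 2 by omega),
      dif_pos (show r + 1 ≤ k by omega)]
    simp [azTrans, Fin.ext_iff]
  · rw [dif_neg h]
    by_cases h2 : r = k
    · rw [dif_pos h2, if_neg (show ¬ r + 1 = k + n + 2 by omega),
        dif_neg (show ¬ r + 1 ≤ k by omega)]
      simp [azTrans, Fin.ext_iff]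
      omega
    · rw [dif_neg h2]
      by_cases h3 : r < k + 1 + n
      · rw [dif_pos h3, if_neg (show ¬ r + 1 = k + n + 2 by omega),
          dif_neg (show ¬ r + 1 ≤ k by omega)]
        simp [azTrans, Fin.ext_iff]
        omega
      · rw [dif_neg h3, if_pos (show r + 1 = k + n + 2 by omega),
          dif_pos (show (0:ℕ) ≤ k by omega)]
        simp [azTrans, Fin.ext_iff]

end AZHelp
namespace AZHelp

lemma forward {k n : ℕ} (φ : Fin n → Fin 3 → Lit k) (χ : Fin k → Bool) (w : Fin n → Fin 3)
    (hw : ∀ m, χ (φ m (w m)).1 = (φ m (w m)).2) :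
    HasZenoRun (AZfor k n φ) := by
  have hp2 : 2 ≤ k + n + 2 := by omega
  have hlt : ∀ i : ℕ, i % (k + n + 2) < k + n + 2 := fun i => Nat.mod_lt _ (by omega)
  refine ⟨{
    st := fun i => stOf k n (i % (k + n + 2))
    val := fun i x => if i = 0 ∨ (x.2 = χ x.1 ∧ (x.1 : ℕ) + 1 ≤ i) then 0 else 1
    del := fun i => if i = 0 then 1 else 0
    tr := fun i => azTrans k n φ (idx χ w (i % (k + n + 2)))
    init_st := ?_
    init_val := ?_
    mem := fun i => ⟨_, rfl⟩
    src_eq := fun i => src_idx φ χ w _ (hlt i)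
    tgt_eq := ?_
    guard_sat := ?_
    reset_eq := ?_
    unreset_eq := ?_ }, ?_⟩
  · -- init_st
    show stOf k n (0 % (k + n + 2)) = _
    rw [Nat.zero_mod, stOf, dif_pos (Nat.zero_le k)]
    show _ = Sum.inl 0
    simp [Fin.ext_iff]
  · -- init_val
    intro x
    simp
  · -- tgt_eq
    intro i
    rw [tgt_idx φ χ w _ (hlt i)]
    show stOf k n _ = stOf k n ((i+1) % (k+n+2))
    rw [succ_mod hp2 i]
  · -- guard_sat
    intro i
    show GSat _ (azTrans k n φ (idx χ w (i % (k+n+2)))).guard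
    by_cases h : i % (k+n+2) < k
    · rw [idx, dif_pos h]; intro cc hcc; simp [azTrans] at hcc
    · rw [idx, dif_neg h]
      by_cases h2 : i % (k+n+2) = k
      · rw [dif_pos h2]; intro cc hcc; simp [azTrans] at hcc
      · rw [dif_neg h2]
        by_cases h3 : i % (k+n+2) < k + 1 + n
        · rw [dif_pos h3]
          intro cc hcc
          simp only [azTrans, List.mem_singleton] at hcc
          subst hcc
          have hi0 : i ≠ 0 := by
            intro h0; subst h0; rw [Nat.zero_mod] at h h2; omega
          set m : Fin n := ⟨i % (k+n+2) - (k+1), by omega⟩ with hm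
          show Cmp.ge.holds _ _
          show ((if i = 0 ∨ ((!(φ m (w m)).2) = χ (φ m (w m)).1 ∧ ((φ m (w m)).1 : ℕ) + 1 ≤ i)
              then (0:NNReal) else 1) + (if i = 0 then (1:NNReal) else 0) : ℝ) ≥ ((1:ℕ) : ℝ)
          rw [if_neg hi0, if_neg (by
            rintro (h0 | ⟨hb, _⟩)
            · exact hi0 h0
            · rw [hw m] at hb; simp at hb)]
          push_cast
          norm_num
        · rw [dif_neg h3]; intro cc hcc; simp [azTrans] at hcc
  · -- reset_eq
    intro i x hx
    replace hx : x ∈ (azTrans k n φ (idx χ w (i % (k+n+2)))).reset := hx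
    unfold idx at hx
    by_cases h : i % (k+n+2) < k
    · rw [dif_pos h] at hx
      simp only [azTrans, Set.mem_singleton_iff] at hx
      subst hx
      show (if i + 1 = 0 ∨ _ then (0:NNReal) else 1) = 0
      rw [if_pos (Or.inr ⟨rfl, Nat.succ_le_succ (Nat.mod_le i _)⟩)]
    · rw [dif_neg h] at hx
      by_cases h2 : i % (k+n+2) = k
      · rw [dif_pos h2] at hx
        simp only [azTrans, Set.mem_empty_iff_false] at hx
      · rw [dif_neg h2] at hx
        by_cases h3 : i % (k+n+2) < k + 1 + n
        · rw [dif_pos h3] at hx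
          simp only [azTrans, Set.mem_empty_iff_false] at hx
        · rw [dif_neg h3] at hx
          simp only [azTrans, Set.mem_empty_iff_false] at hx
  · -- unreset_eq
    intro i x hx
    by_cases hi : i = 0
    · subst hi
      have hcond : ¬ ((1:ℕ) = 0 ∨ (x.2 = χ x.1 ∧ (x.1:ℕ) + 1 ≤ 1)) := by
        rintro (h1 | ⟨hb, hle⟩)
        · omega
        · by_cases hk : 0 < k
          · apply hx
            show x ∈ (azTrans k n φ (idx χ w (0 % (k+n+2)))).reset
            rw [Nat.zero_mod]
            unfold idx
            rw [dif_pos hk]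
            have hx1 : x.1 = ⟨0, hk⟩ := Fin.ext (show (x.1:ℕ) = 0 by omega)
            show x ∈ ({((⟨0, hk⟩ : Fin k), χ ⟨0, hk⟩)} : Set (Lit k))
            have : x = (⟨0, hk⟩, χ ⟨0, hk⟩) := Prod.ext hx1 (by rw [hb, hx1])
            rw [this]
            rfl
          · exact absurd x.1.2 (by omega)
      show (if (1:ℕ) = 0 ∨ _ then (0:NNReal) else 1) = (if (0:ℕ) = 0 ∨ _ then (0:NNReal) else 1) + (if (0:ℕ) = 0 then (1:NNReal) else 0)
      rw [if_neg hcond, if_pos (Or.inl rfl), if_pos rfl]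
      simp
    · have hkey : ¬ (x.2 = χ x.1 ∧ (x.1:ℕ) = i) := by
        rintro ⟨hb, hv⟩
        have hik : i < k := by have := x.1.2; omega
        apply hx
        show x ∈ (azTrans k n φ (idx χ w (i % (k+n+2)))).reset
        rw [Nat.mod_eq_of_lt (show i < k + n + 2 by omega)]
        unfold idx
        rw [dif_pos hik]
        have hx1 : x.1 = ⟨i, hik⟩ := Fin.ext hv
        show x ∈ ({((⟨i, hik⟩ : Fin k), χ ⟨i, hik⟩)} : Set (Lit k))
        have : x = (⟨i, hik⟩, χ ⟨i, hik⟩) := Prod.ext hx1 (by rw [hb, hx1])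
        rw [this]
        rfl
      have hiff : (i + 1 = 0 ∨ (x.2 = χ x.1 ∧ (x.1:ℕ) + 1 ≤ i + 1)) ↔
          (i = 0 ∨ (x.2 = χ x.1 ∧ (x.1:ℕ) + 1 ≤ i)) := by
        constructor
        · rintro (h1 | ⟨hb, hle⟩)
          · omega
          · refine Or.inr ⟨hb, ?_⟩
            have : (x.1:ℕ) ≠ i := fun hv => hkey ⟨hb, hv⟩
            omega
        · rintro (h1 | ⟨hb, hle⟩)
          · exact absurd h1 hi
          · exact Or.inr ⟨hb, by omega⟩
      show (if i + 1 = 0 ∨ _ then (0:NNReal) else 1) = (if i = 0 ∨ _ then (0:NNReal) else 1) + (if i = 0 then (1:NNReal) else 0)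
      rw [if_neg hi, add_zero]
      exact if_congr hiff rfl rfl
  · -- Zeno
    refine ⟨1, fun m => ?_⟩
    have key : ∀ i : ℕ, (((if i = 0 then (1:NNReal) else 0) : NNReal) : ℝ) = if i = 0 then (1:ℝ) else 0 := by
      intro i; split <;> simp
    calc ∑ i ∈ Finset.range m, (((if i = 0 then (1:NNReal) else 0) : NNReal) : ℝ)
        = ∑ i ∈ Finset.range m, (if i = 0 then (1:ℝ) else 0) :=
          Finset.sum_congr rfl (fun i _ => key i)
      _ = if 0 ∈ Finset.range m then (1:ℝ) else 0 := Finset.sum_ite_eq' _ _ _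
      _ ≤ 1 := by split <;> norm_num

end AZHelp
namespace AZHelp

lemma st_eq {k n : ℕ} (φ : Fin n → Fin 3 → Lit k) (ρ : TARun (AZfor k n φ)) (i : ℕ) :
    ρ.st i = stOf k n (i % (k + n + 2)) := by
  induction i with
  | zero =>
    rw [ρ.init_st]
    show Sum.inl 0 = stOf k n (0 % (k+n+2))
    rw [Nat.zero_mod, stOf, dif_pos (Nat.zero_le k)]
    simp [Fin.ext_iff]
  | succ i ih =>
    obtain ⟨a, ha⟩ := ρ.mem i
    have hsrc := ρ.src_eq i
    have htgt := ρ.tgt_eq i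
    rw [← ha] at hsrc htgt
    rw [ih] at hsrc
    rw [← htgt, succ_mod (show 2 ≤ k + n + 2 by omega) i]
    have hrlt : i % (k+n+2) < k + n + 2 := Nat.mod_lt _ (by omega)
    rcases a with ⟨j, b⟩ | ⟨⟨m, j⟩ | b⟩
    · -- q-transition
      have hsrc' : Sum.inl j.castSucc = stOf k n (i % (k+n+2)) := hsrc.symm ▸ hsrc
      rw [stOf] at hsrc
      split at hsrc
      · next h =>
        have hj : (j:ℕ) = i % (k+n+2) := by
          have := Sum.inl.inj hsrc
          simpa [Fin.ext_iff] using this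
        have hjk : i % (k+n+2) < k := by have := j.2; omega
        rw [if_neg (by omega), stOf, dif_pos (show i % (k+n+2) + 1 ≤ k by omega)]
        show Sum.inl j.succ = _
        simp [Fin.ext_iff]
        omega
      · next h => exact absurd hsrc (by simp [azTrans])
    · -- clause transition
      rw [stOf] at hsrc
      split at hsrc
      · next h => exact absurd hsrc (by simp [azTrans])
      · next h =>
        have hm : (m:ℕ) = min (i % (k+n+2) - (k+1)) n := by
          have := Sum.inr.inj hsrc
          simpa [Fin.ext_iff] using this
        have hmr : i % (k+n+2) = k + 1 + (m:ℕ) := by have := m.2; omega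
        rw [if_neg (by have := m.2; omega), stOf,
          dif_neg (show ¬ i % (k+n+2) + 1 ≤ k by omega)]
        show Sum.inr m.succ = _
        simp [Fin.ext_iff]
        have := m.2
        omega
    · -- the two linking transitions
      cases b
      · -- false : r_n → q_0
        rw [stOf] at hsrc
        split at hsrc
        · next h => exact absurd hsrc (by simp [azTrans])
        · next h =>
          have hm : (n:ℕ) = min (i % (k+n+2) - (k+1)) n := by
            have := Sum.inr.inj hsrc
            simpa [Fin.ext_iff, Fin.last] using this
          have hmr : i % (k+n+2) = k + n + 1 := by omega
          rw [if_pos (by omega), stOf, dif_pos (Nat.zero_le k)]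
          show Sum.inl 0 = _
          simp [Fin.ext_iff]
      · -- true : q_k → r_0
        rw [stOf] at hsrc
        split at hsrc
        · next h =>
          have hkr : (k:ℕ) = i % (k+n+2) := by
            have := Sum.inl.inj hsrc
            simpa [Fin.ext_iff, Fin.last] using this
          rw [if_neg (by omega), stOf, dif_neg (show ¬ i % (k+n+2) + 1 ≤ k by omega)]
          show Sum.inr 0 = _
          simp [Fin.ext_iff]
          omega
        · next h => exact absurd hsrc (by simp [azTrans])

end AZHelp
namespace AZHelp

lemma backward {k n : ℕ} (φ : Fin n → Fin 3 → Lit k) (ρ : TARun (AZfor k n φ))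
    (hz : ρ.Zeno) : Sat3 φ := by
  obtain ⟨c, hc⟩ := hz
  have hsum : Summable (fun i => (ρ.del i : ℝ)) :=
    summable_of_sum_range_le (fun i => (ρ.del i).coe_nonneg) hc
  obtain ⟨N, hN⟩ : ∃ N, ∑' m, (ρ.del (m + N) : ℝ) < 1 :=
    ((tendsto_sum_nat_add (fun i => (ρ.del i : ℝ))).eventually_lt_const one_pos).exists
  have htail : ∀ a b : ℕ, N ≤ a → a ≤ b →
      ∑ i ∈ Finset.Ico a b, (ρ.del i : ℝ) ≤ ∑' m, (ρ.del (m + N) : ℝ) := by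
    intro a b hNa hab
    have hg : Summable (fun m => (ρ.del (m + N) : ℝ)) := (summable_nat_add_iff N).2 hsum
    calc ∑ i ∈ Finset.Ico a b, (ρ.del i : ℝ)
        = ∑ j ∈ Finset.range (b - a), (ρ.del (a + j) : ℝ) :=
          Finset.sum_Ico_eq_sum_range _ a b
      _ = ∑ j ∈ Finset.range (b - a), (ρ.del (((a - N) + j) + N) : ℝ) := by
          refine Finset.sum_congr rfl fun j _ => ?_
          congr 2
          omega
      _ = ∑ j ∈ Finset.Ico (a - N) ((b - a) + (a - N)), (ρ.del (j + N) : ℝ) := by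
          rw [Finset.sum_Ico_eq_sum_range]
          simp [Nat.add_sub_cancel]
      _ ≤ ∑' m, (ρ.del (m + N) : ℝ) :=
          Summable.sum_le_tsum _ (fun m _ => (ρ.del _).coe_nonneg) hg
  -- q-phase transitions of the chosen cycle
  have hq : ∀ i : Fin k, ∃ b : Bool,
      ρ.tr ((k+n+2) * N + (i:ℕ)) = azTrans k n φ (Sum.inl (i, b)) := by
    intro i
    obtain ⟨a, ha⟩ := ρ.mem ((k+n+2) * N + (i:ℕ))
    have hsrc := ρ.src_eq ((k+n+2) * N + (i:ℕ))
    rw [← ha, st_eq] at hsrc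
    have hmod : ((k+n+2) * N + (i:ℕ)) % (k+n+2) = (i:ℕ) := by
      rw [Nat.mul_add_mod]
      exact Nat.mod_eq_of_lt (by have := i.2; omega)
    rw [hmod, stOf, dif_pos (show (i:ℕ) ≤ k by have := i.2; omega)] at hsrc
    rcases a with ⟨j, b⟩ | ⟨⟨m, j⟩ | b⟩
    · have hj : j = i := by
        have := Sum.inl.inj hsrc
        have hv : (j:ℕ) = (i:ℕ) := by simpa [Fin.ext_iff] using this
        exact Fin.ext hv
      exact ⟨b, by rw [← ha, hj]⟩
    · exact absurd hsrc (by simp [azTrans])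
    · cases b
      · exact absurd hsrc (by simp [azTrans])
      · exfalso
        have := Sum.inl.inj hsrc
        have hv : (k:ℕ) = (i:ℕ) := by simpa [Fin.ext_iff, Fin.last] using this
        have := i.2
        omega
  choose χ hχ using hq
  -- clause transitions of the chosen cycle
  have hr : ∀ m : Fin n, ∃ j : Fin 3,
      ρ.tr ((k+n+2) * N + (k + 1 + (m:ℕ))) = azTrans k n φ (Sum.inr (Sum.inl (m, j))) := by
    intro m
    obtain ⟨a, ha⟩ := ρ.mem ((k+n+2) * N + (k + 1 + (m:ℕ)))
    have hsrc := ρ.src_eq ((k+n+2) * N + (k + 1 + (m:ℕ)))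
    rw [← ha, st_eq] at hsrc
    have hmod : ((k+n+2) * N + (k + 1 + (m:ℕ))) % (k+n+2) = k + 1 + (m:ℕ) := by
      rw [Nat.mul_add_mod]
      exact Nat.mod_eq_of_lt (by have := m.2; omega)
    rw [hmod, stOf, dif_neg (show ¬ k + 1 + (m:ℕ) ≤ k by omega)] at hsrc
    rcases a with ⟨j, b⟩ | ⟨⟨m', j⟩ | b⟩
    · exact absurd hsrc (by simp [azTrans])
    · have hm : m' = m := by
        have := Sum.inr.inj hsrc
        have hv : (m':ℕ) = min (k + 1 + (m:ℕ) - (k+1)) n := by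
          simpa [Fin.ext_iff] using this
        have hv2 : (m':ℕ) = (m:ℕ) := by have := m.2; omega
        exact Fin.ext hv2
      exact ⟨j, by rw [← ha, hm]⟩
    · cases b
      · exfalso
        have := Sum.inr.inj hsrc
        have hv : (n:ℕ) = min (k + 1 + (m:ℕ) - (k+1)) n := by
          simpa [Fin.ext_iff, Fin.last] using this
        have := m.2
        omega
      · exact absurd hsrc (by simp [azTrans])
  refine ⟨χ, fun m => ?_⟩
  obtain ⟨j, hj⟩ := hr m
  refine ⟨j, ?_⟩
  by_contra hne
  have hbx : χ (φ m j).1 = !(φ m j).2 := Bool.eq_not_iff.mpr hne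
  set i0 : Fin k := (φ m j).1 with hi0
  set s : ℕ := (k+n+2) * N + (k + 1 + (m:ℕ)) with hs
  -- the clock (i0, χ i0) was reset recently
  have hreset : ρ.val ((k+n+2) * N + (i0:ℕ) + 1) (i0, χ i0) = 0 := by
    apply ρ.reset_eq
    rw [hχ i0]
    show (i0, χ i0) ∈ ({(i0, χ i0)} : Set (Lit k))
    rfl
  -- the guard requires value ≥ 1
  have hg := ρ.guard_sat s
  rw [hj] at hg
  have hg1 := hg ⟨((φ m j).1, !(φ m j).2), Cmp.ge, 1⟩ (by simp [azTrans])
  have hg2 : ((ρ.val s ((φ m j).1, !(φ m j).2) : ℝ) + (ρ.del s : ℝ)) ≥ 1 := by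
    have : ((ρ.val s ((φ m j).1, !(φ m j).2) + ρ.del s : NNReal) : ℝ) ≥ ((1:ℕ) : ℝ) := hg1
    push_cast at this
    exact this
  rw [← hbx, ← hi0] at hg2
  -- but the value stays below 1
  have hik : (i0:ℕ) < k := i0.2
  have ha1 : (k+n+2) * N + (i0:ℕ) + 1 ≤ s := by omega
  have hNa : N ≤ (k+n+2) * N + (i0:ℕ) + 1 := by nlinarith [Nat.le_mul_of_pos_left N (show 0 < k+n+2 by omega)]
  have hb := val_le ρ (i0, χ i0) _ hreset s ha1
  have hsum1 : ∑ i ∈ Finset.Ico ((k+n+2) * N + (i0:ℕ) + 1) (s+1), (ρ.del i : ℝ)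
      = (∑ i ∈ Finset.Ico ((k+n+2) * N + (i0:ℕ) + 1) s, (ρ.del i : ℝ)) + (ρ.del s : ℝ) :=
    Finset.sum_Ico_succ_top ha1 _
  have hle := htail ((k+n+2) * N + (i0:ℕ) + 1) (s+1) hNa (by omega)
  rw [hsum1] at hle
  linarith

end AZHelp

/-- A 3CNF formula `φ` is satisfiable iff `A^Z_φ` has a Zeno run. -/
theorem sat3_iff_hasZenoRun_AZ (k n : ℕ) (φ : Fin n → Fin 3 → Lit k) :
    Sat3 φ ↔ HasZenoRun (AZfor k n φ) := by
  constructor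
  · rintro ⟨χ, hχ⟩
    choose w hw using hχ
    exact AZHelp.forward φ χ w hw
  · rintro ⟨ρ, hz⟩
    exact AZHelp.backward φ ρ hz
end
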